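/- arXiv:2211.01450 — 9 statements merged into one kernel-verified Lean document; each statement's English description precedes it below -/
import Mathlib

section
/- Let (u1,u2,u3,u4) and (y1,y2,y3,y4) be nonzero vectors in K^4 satisfying all fifteen defining equations of the model. Then c·u1 − δ·u3 ≠ 0 and c·y1 − δ·y3 ≠ 0. -/
lemma nsq_aux {K : Type*} [Field K] {s x y : K} (hs : ¬ IsSquare s)
    (h : x ^ 2 = s * y ^ 2) : x = 0 ∧ y = 0 := by
  by_cases hy : y = 0
  · subst hy
    exact ⟨sq_eq_zero_iff.mp (by linear_combination h), rfl⟩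
  · exfalso
    apply hs
    refine ⟨x / y, ?_⟩
    field_simp
    linear_combination -h

set_option maxHeartbeats 4000000 in
/-- Theorem 5.1 / `alwaysnonzero`. Let `(u1,u2,u3,u4)` and `(y1,y2,y3,y4)`
be nonzero vectors in `K⁴` satisfying all fifteen defining equations of the
`ℙ³ × ℙ³` model of the Jacobian `J_{𝔞,b,c}`.  If `c`, `c·d` and `g·(g − b²(c−1))` are
nonsquares in `K`, then `c·u1 − δ·u3 ≠ 0` and `c·y1 − δ·y3 ≠ 0`. -/
theorem stmt_0 {K : Type*} [Field K] (hchar : (2 : K) ≠ 0)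
    (fa b c a δ d e f g : K)
    (hfa : fa ^ 2 ≠ c)
    (ha : a = ((fa ^ 2 - 2 * fa * c + c) / (fa ^ 2 - c)) ^ 2)
    (hδ : δ = c * (fa ^ 2 - 2 * fa + c) / (fa ^ 2 - c))
    (hd : d = b ^ 2 * c - c + 1)
    (he : e = a * b ^ 2 - a - b ^ 2)
    (hf : f = a + c - 1)
    (hg : g = b ^ 2 * c + a)
    (hdisc : 2 * a * b * c * d * e * f * g * (a - 1) * (b ^ 2 - 1) * (c - 1) ≠ 0)
    (hc : ¬ IsSquare c)
    (hcd : ¬ IsSquare (c * d))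
    (hgg : ¬ IsSquare (g * (g - b ^ 2 * (c - 1))))
    (u1 u2 u3 u4 y1 y2 y3 y4 : K)
    (hu : (u1, u2, u3, u4) ≠ (0, 0, 0, 0))
    (hy : (y1, y2, y3, y4) ≠ (0, 0, 0, 0))
    (r1 r2 r3 r4 r5 r6 s1 s2 s3 s4 s5 s6 : K)
    (hr1 : r1 = b ^ 2 * (a * c * (-f * u1 ^ 2 + e * u2 ^ 2) - c * e * f * u3 ^ 2 + a * f * u4 ^ 2))
    (hr2 : r2 = -(b * g) * (a * c * u1 * u2 - f * u3 * u4))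
    (hr3 : r3 = -(a * c) * (d * u1 ^ 2 + b ^ 2 * f * u2 ^ 2) + f * (a * d * u3 ^ 2 + b ^ 2 * c * u4 ^ 2))
    (hr4 : r4 = a * b ^ 2 * c * (c * u1 ^ 2 + a * u2 ^ 2 - f * u3 ^ 2 - u4 ^ 2))
    (hr5 : r5 = a * b * c * g * (u1 * u2 - u3 * u4))
    (hr6 : r6 = a * c * (a * d * u1 ^ 2 - b ^ 2 * c * e * u2 ^ 2 + d * e * u3 ^ 2 - b ^ 2 * f * u4 ^ 2))
    (hs1 : s1 = b ^ 2 * (a * c * (-f * y1 ^ 2 + e * y2 ^ 2) - c * e * f * y3 ^ 2 + a * f * y4 ^ 2))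
    (hs2 : s2 = -(b * g) * (a * c * y1 * y2 - f * y3 * y4))
    (hs3 : s3 = -(a * c) * (d * y1 ^ 2 + b ^ 2 * f * y2 ^ 2) + f * (a * d * y3 ^ 2 + b ^ 2 * c * y4 ^ 2))
    (hs4 : s4 = a * b ^ 2 * c * (c * y1 ^ 2 + a * y2 ^ 2 - f * y3 ^ 2 - y4 ^ 2))
    (hs5 : s5 = a * b * c * g * (y1 * y2 - y3 * y4))
    (hs6 : s6 = a * c * (a * d * y1 ^ 2 - b ^ 2 * c * e * y2 ^ 2 + d * e * y3 ^ 2 - b ^ 2 * f * y4 ^ 2))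
    (e1 : r2 ^ 2 - r1 * r3 = 0)
    (e2 : s2 ^ 2 - s1 * s3 = 0)
    (e3 : u2 * s1 - u1 * s2 = 0)
    (e4 : u2 * s2 - u1 * s3 = 0)
    (e5 : u4 * s4 - u3 * s5 = 0)
    (e6 : u4 * s5 - u3 * s6 = 0)
    (e7 : y2 * r1 - y1 * r2 = 0)
    (e8 : y2 * r2 - y1 * r3 = 0)
    (e9 : y4 * r4 - y3 * r5 = 0)
    (e10 : y4 * r5 - y3 * r6 = 0)
    (e11 : r1 * y3 ^ 2 + r4 * y1 ^ 2 = 0)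
    (e12 : r1 * y4 ^ 2 + r6 * y1 ^ 2 = 0)
    (e13 : r2 * y3 * y4 + r5 * y1 * y2 = 0)
    (e14 : a * (b * u2 * y1 - u1 * y2) * (b * u4 * y3 - u3 * y4)
            - (e * u3 * y2 + b * u4 * y1) * (b * u2 * y3 - u1 * y4) = 0)
    (e15 : c * (e * u3 * y3 + b * u4 * y4) * (b * u2 * y2 - u1 * y1)
            - f * (b * u2 * y4 - u1 * y3) * (b * u4 * y2 - u3 * y1) = 0) :
    c * u1 - δ * u3 ≠ 0 ∧ c * y1 - δ * y3 ≠ 0 := by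
  subst hd he hf hg
  -- extract nonvanishing of the basic constants
  have ha0 : a ≠ 0 := fun h => hdisc (by linear_combination (2*b*c*(b^2*c-c+1)*(a*b^2-a-b^2)*(a+c-1)*(b^2*c+a)*(a-1)*(b^2-1)*(c-1))*h)
  have hb0 : b ≠ 0 := fun h => hdisc (by linear_combination (2*a*c*(b^2*c-c+1)*(a*b^2-a-b^2)*(a+c-1)*(b^2*c+a)*(a-1)*(b^2-1)*(c-1))*h)
  have hc0 : c ≠ 0 := fun h => hdisc (by linear_combination (2*a*b*(b^2*c-c+1)*(a*b^2-a-b^2)*(a+c-1)*(b^2*c+a)*(a-1)*(b^2-1)*(c-1))*h)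
  have hd0 : b^2*c - c + 1 ≠ 0 := fun h => hdisc (by linear_combination (2*a*b*c*(a*b^2-a-b^2)*(a+c-1)*(b^2*c+a)*(a-1)*(b^2-1)*(c-1))*h)
  have he0 : a*b^2 - a - b^2 ≠ 0 := fun h => hdisc (by linear_combination (2*a*b*c*(b^2*c-c+1)*(a+c-1)*(b^2*c+a)*(a-1)*(b^2-1)*(c-1))*h)
  have hf0 : a + c - 1 ≠ 0 := fun h => hdisc (by linear_combination (2*a*b*c*(b^2*c-c+1)*(a*b^2-a-b^2)*(b^2*c+a)*(a-1)*(b^2-1)*(c-1))*h)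
  have hg0 : b^2*c + a ≠ 0 := fun h => hdisc (by linear_combination (2*a*b*c*(b^2*c-c+1)*(a*b^2-a-b^2)*(a+c-1)*(a-1)*(b^2-1)*(c-1))*h)
  have ha1 : a - 1 ≠ 0 := fun h => hdisc (by linear_combination (2*a*b*c*(b^2*c-c+1)*(a*b^2-a-b^2)*(a+c-1)*(b^2*c+a)*(b^2-1)*(c-1))*h)
  have hc1 : c - 1 ≠ 0 := fun h => hdisc (by linear_combination (2*a*b*c*(b^2*c-c+1)*(a*b^2-a-b^2)*(a+c-1)*(b^2*c+a)*(a-1)*(b^2-1))*h)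
  have hA : fa^2 - c ≠ 0 := sub_ne_zero_of_ne hfa
  have haA : a * (fa^2 - c)^2 = (fa^2 - 2*fa*c + c)^2 := by
    rw [ha]; field_simp
  have hδA : δ * (fa^2 - c) = c * (fa^2 - 2*fa + c) := by
    rw [hδ]; field_simp
  have hfA : (a + c - 1) * (fa^2 - c)^2 = c * (fa^2 - 2*fa + c)^2 := by
    linear_combination haA
  have hδ2 : δ^2 = c * (a + c - 1) := by
    have h := mul_right_cancel₀ (pow_ne_zero 2 hA)
      (show δ^2 * (fa^2-c)^2 = (c*(a+c-1)) * (fa^2-c)^2 by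
        linear_combination (δ*(fa^2 - c) + c*(fa^2 - 2*fa + c)) * hδA - c * hfA)
    exact h
  have hP0 : fa^2 - 2*fa*c + c ≠ 0 := by
    intro h
    apply ha0
    have h2 : a * (fa^2 - c)^2 = 0 := by rw [haA, h]; ring
    exact (mul_eq_zero.mp h2).resolve_right (pow_ne_zero 2 hA)
  have hQ0 : fa^2 - 2*fa + c ≠ 0 := by
    intro h
    apply hf0
    have h2 : (a + c - 1) * (fa^2 - c)^2 = 0 := by rw [hfA, h]; ring
    exact (mul_eq_zero.mp h2).resolve_right (pow_ne_zero 2 hA)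
  have hb2 : b^2 ≠ 0 := pow_ne_zero 2 hb0
  have hab2 : a*b^2 ≠ 0 := mul_ne_zero ha0 hb2
  have hab2c : a*b^2*c ≠ 0 := mul_ne_zero hab2 hc0
  -- =========================== part 1 : the u-statement ===========================
  have HU : c * u1 - δ * u3 ≠ 0 := by
    intro H
    have F1 : c * u1^2 = (a + c - 1) * u3^2 :=
      mul_left_cancel₀ hc0 (by linear_combination (c*u1 + δ*u3) * H + u3^2 * hδ2)
    have h2s : (a + c - 1) * (r1*y3)^2 = a * (r2*y1)^2 := by
      linear_combination ((a+c-1)*r1) * e11 - (a*y1^2) * e1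
        - (y1^2*r1*(a+c-1)) * hr4 - (y1^2*r1*a) * hr3
        + (y1^2*r1*a*(a*(b^2*c-c+1) - b^2*c*(a+c-1))) * F1
    have key : ((fa^2 - 2*fa*c + c) * (r2*y1))^2 = c * ((fa^2 - 2*fa + c) * (r1*y3))^2 := by
      linear_combination (-(r2*y1)^2) * haA + ((r1*y3)^2) * hfA - (fa^2-c)^2 * h2s
    obtain ⟨k1, k2⟩ := nsq_aux hc key
    have hry2 : r2 * y1 = 0 := (mul_eq_zero.mp k1).resolve_left hP0
    have hry1 : r1 * y3 = 0 := (mul_eq_zero.mp k2).resolve_left hQ0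
    have keyRR : r1 = 0 → r2 = 0 → u1 = 0 := by
      intro w1 w2
      by_contra hu1
      have t1 : b * (b^2*c + a) * c * u1 * (a*δ*u2 - (a+c-1)*u4) = 0 := by
        linear_combination δ * hr2 - δ * w2 - (b*(b^2*c+a)*(a+c-1)*u4) * H
      have t2 : a*δ*u2 - (a+c-1)*u4 = 0 :=
        (mul_eq_zero.mp t1).resolve_left
          (mul_ne_zero (mul_ne_zero (mul_ne_zero hb0 hg0) hc0) hu1)
      have t3z : (a+c-1) * (a^2*c*u2^2 - (a+c-1)*u4^2) = 0 := by
        linear_combination (a*δ*u2 + (a+c-1)*u4) * t2 - (a^2*u2^2) * hδ2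
      have t3 : (a+c-1)*u4^2 = a^2*c*u2^2 := by
        have h := (mul_eq_zero.mp t3z).resolve_left hf0
        linear_combination -h
      have t4z : b^2*c*(a+c-1)*(a-1)*(a*(a+b^2)*u2^2 - (b^2*c+a)*u1^2) = 0 := by
        linear_combination (a+c-1)*w1 - (a+c-1)*hr1 - (a*b^2*(a+c-1))*t3
          - (b^2*c*(a*b^2-a-b^2)*(a+c-1))*F1
      have t5 : a*(a+b^2)*u2^2 = (b^2*c+a)*u1^2 := by
        have h := (mul_eq_zero.mp t4z).resolve_left
          (mul_ne_zero (mul_ne_zero (mul_ne_zero hb2 hc0) hf0) ha1)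
        linear_combination h
      have t6 : u2 ≠ 0 := by
        intro h
        apply hu1
        have h7 : (b^2*c+a)*u1^2 = 0 := by linear_combination (a*(a+b^2)*u2)*h - t5
        exact sq_eq_zero_iff.mp ((mul_eq_zero.mp h7).resolve_left hg0)
      have t7 : ((b^2*c+a)*(fa^2-c)*u1)^2
          = ((b^2*c+a) * ((b^2*c+a) - b^2*(c-1))) * ((fa^2-2*fa*c+c)*u2)^2 := by
        linear_combination (-((b^2*c+a)*(fa^2-c)^2))*t5 + ((b^2*c+a)*(a+b^2)*u2^2)*haA
      obtain ⟨z1, _⟩ := nsq_aux hgg t7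
      exact hu1 ((mul_eq_zero.mp z1).resolve_left (mul_ne_zero hg0 hA))
    by_cases hy3 : y3 = 0
    · subst hy3
      have e11' : r4 * y1^2 = 0 := by linear_combination e11
      by_cases hy1 : y1 = 0
      · subst hy1
        by_cases hy2 : y2 = 0
        · subst hy2
          have hy4 : y4 ≠ 0 := fun h => hy (by rw [h])
          have w1 : r1 = 0 := by
            have h0 : r1 * y4^2 = 0 := by linear_combination e12
            exact (mul_eq_zero.mp h0).resolve_right (pow_ne_zero 2 hy4)
          have w4 : r4 = 0 := by
            have h0 : y4 * r4 = 0 := by linear_combination e9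
            exact (mul_eq_zero.mp h0).resolve_left hy4
          have h24 : a*u2^2 = u4^2 := by
            have hz : a*b^2*c*(a*u2^2 - u4^2) = 0 := by
              linear_combination w4 - hr4 - (a*b^2*c)*F1
            have h := (mul_eq_zero.mp hz).resolve_left hab2c
            linear_combination h
          have h2c : a*u2^2 = c*u1^2 := by
            have hz : b^2*(a-1)*(b^2*c+a)*(a*u2^2 - c*u1^2) = 0 := by
              linear_combination w1 - hr1 + (a*b^2*(a+c-1))*h24 - (b^2*c*(a*b^2-a-b^2))*F1
            have h := (mul_eq_zero.mp hz).resolve_left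
              (mul_ne_zero (mul_ne_zero hb2 ha1) hg0)
            linear_combination h
          have sqc : ((fa^2-2*fa*c+c)*u2)^2 = c*((fa^2-c)*u1)^2 := by
            linear_combination (-(u2^2))*haA + (fa^2-c)^2*h2c
          obtain ⟨z1, z2⟩ := nsq_aux hc sqc
          have hu2z : u2 = 0 := (mul_eq_zero.mp z1).resolve_left hP0
          have hu1z : u1 = 0 := (mul_eq_zero.mp z2).resolve_left hA
          have hu4z : u4 = 0 := sq_eq_zero_iff.mp (by rw [← h24, hu2z]; ring)
          have hu3z : u3 = 0 := by
            have h0 : (a+c-1)*u3^2 = 0 := by linear_combination -F1 + (c*u1)*hu1z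
            exact sq_eq_zero_iff.mp ((mul_eq_zero.mp h0).resolve_left hf0)
          exact hu (by rw [hu1z, hu2z, hu3z, hu4z])
        · have w1 : r1 = 0 := by
            have h0 : y2*r1 = 0 := by linear_combination e7
            exact (mul_eq_zero.mp h0).resolve_left hy2
          have w2 : r2 = 0 := by
            have h0 : y2*r2 = 0 := by linear_combination e8
            exact (mul_eq_zero.mp h0).resolve_left hy2
          have hu1z : u1 = 0 := keyRR w1 w2
          subst hu1z
          have hu3z : u3 = 0 := by
            have h0 : (a+c-1)*u3^2 = 0 := by linear_combination -F1
            exact sq_eq_zero_iff.mp ((mul_eq_zero.mp h0).resolve_left hf0)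
          subst hu3z
          have hE : c*(a*b^2-a-b^2)*u2^2 + (a+c-1)*u4^2 = 0 := by
            have hz : a*b^2*(c*(a*b^2-a-b^2)*u2^2 + (a+c-1)*u4^2) = 0 := by
              linear_combination w1 - hr1
            exact (mul_eq_zero.mp hz).resolve_left hab2
          have hu2 : u2 ≠ 0 := by
            intro h
            have h4 : (a+c-1)*u4^2 = 0 := by
              linear_combination hE - (c*(a*b^2-a-b^2)*u2)*h
            have hu4z : u4 = 0 := sq_eq_zero_iff.mp ((mul_eq_zero.mp h4).resolve_left hf0)
            exact hu (by rw [h, hu4z])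
          have hu4 : u4 ≠ 0 := by
            intro h
            have h4 : c*(a*b^2-a-b^2)*u2^2 = 0 := by
              linear_combination hE - ((a+c-1)*u4)*h
            have hu2z : u2 = 0 := sq_eq_zero_iff.mp
              ((mul_eq_zero.mp h4).resolve_left (mul_ne_zero hc0 he0))
            exact hu (by rw [h, hu2z])
          have hs4z : s4 = 0 := by
            have h0 : u4*s4 = 0 := by linear_combination e5
            exact (mul_eq_zero.mp h0).resolve_left hu4
          have hs1z : s1 = 0 := by
            have h0 : u2*s1 = 0 := by linear_combination e3
            exact (mul_eq_zero.mp h0).resolve_left hu2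
          have hy24 : a*y2^2 = y4^2 := by
            have hz : a*b^2*c*(a*y2^2 - y4^2) = 0 := by linear_combination hs4z - hs4
            have h := (mul_eq_zero.mp hz).resolve_left hab2c
            linear_combination h
          have hz : a*b^2*(a-1)*(b^2*c+a)*y2^2 = 0 := by
            linear_combination hs1z - hs1 + (a*b^2*(a+c-1))*hy24
          exact hy2 (sq_eq_zero_iff.mp ((mul_eq_zero.mp hz).resolve_left
            (mul_ne_zero (mul_ne_zero hab2 ha1) hg0)))
      · have w2 : r2 = 0 := (mul_eq_zero.mp hry2).resolve_right hy1
        have w4 : r4 = 0 := (mul_eq_zero.mp e11').resolve_right (pow_ne_zero 2 hy1)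
        have h24 : a*u2^2 = u4^2 := by
          have hz : a*b^2*c*(a*u2^2 - u4^2) = 0 := by
            linear_combination w4 - hr4 - (a*b^2*c)*F1
          have h := (mul_eq_zero.mp hz).resolve_left hab2c
          linear_combination h
        by_cases hu1 : u1 = 0
        · subst hu1
          have hu3z : u3 = 0 := by
            have h0 : (a+c-1)*u3^2 = 0 := by linear_combination -F1
            exact sq_eq_zero_iff.mp ((mul_eq_zero.mp h0).resolve_left hf0)
          subst hu3z
          have hu2 : u2 ≠ 0 := by
            intro h
            have hu4z : u4 = 0 := sq_eq_zero_iff.mp (by rw [← h24, h]; ring)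
            exact hu (by rw [h, hu4z])
          have hz : a*b^2*(a-1)*(b^2*c+a)*u2^2*(y4^2 - c*y1^2) = 0 := by
            linear_combination e12 - y4^2*hr1 - y1^2*hr6 + (a*b^2*(a+c-1)*(y4^2-c*y1^2))*h24
          have hyc : y4^2 = c*y1^2 := by
            have h := (mul_eq_zero.mp hz).resolve_left
              (mul_ne_zero (mul_ne_zero (mul_ne_zero hab2 ha1) hg0) (pow_ne_zero 2 hu2))
            linear_combination h
          obtain ⟨_, z2⟩ := nsq_aux hc hyc
          exact hy1 z2
        · have t1 : b * (b^2*c + a) * c * u1 * (a*δ*u2 - (a+c-1)*u4) = 0 := by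
            linear_combination δ * hr2 - δ * w2 - (b*(b^2*c+a)*(a+c-1)*u4) * H
          have t2 : a*δ*u2 - (a+c-1)*u4 = 0 :=
            (mul_eq_zero.mp t1).resolve_left
              (mul_ne_zero (mul_ne_zero (mul_ne_zero hb0 hg0) hc0) hu1)
          have hu2z : u2 = 0 := by
            have hz : a*(a+c-1)*(a-1)*(c-1)*u2^2 = 0 := by
              linear_combination (a*δ*u2 + (a+c-1)*u4)*t2 - (a^2*u2^2)*hδ2 - (a+c-1)^2*h24
            exact sq_eq_zero_iff.mp ((mul_eq_zero.mp hz).resolve_left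
              (mul_ne_zero (mul_ne_zero (mul_ne_zero ha0 hf0) ha1) hc1))
          subst hu2z
          have hu4z : u4 = 0 := sq_eq_zero_iff.mp (by rw [← h24]; ring)
          subst hu4z
          have hz : c*(a-1)*(b^2*c+a)*u1^2*(a*(b^2*c-c+1)*y1^2 - b^2*(a+c-1)*y4^2) = 0 := by
            linear_combination (a+c-1)*e12 - ((a+c-1)*y4^2)*hr1 - ((a+c-1)*y1^2)*hr6
              + (a*c*(b^2*c-c+1)*(a*b^2-a-b^2)*y1^2 - b^2*c*(a*b^2-a-b^2)*(a+c-1)*y4^2)*F1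
          have hADy : a*(b^2*c-c+1)*y1^2 = b^2*(a+c-1)*y4^2 := by
            have h := (mul_eq_zero.mp hz).resolve_left
              (mul_ne_zero (mul_ne_zero (mul_ne_zero hc0 ha1) hg0) (pow_ne_zero 2 hu1))
            linear_combination h
          have T7 : ((b^2*c-c+1)*(fa^2-2*fa*c+c)*y1)^2
              = (c * (b^2*c-c+1)) * ((b*(fa^2-2*fa+c))*y4)^2 := by
            linear_combination ((b^2*c-c+1)*(fa^2-c)^2)*hADy
              - ((b^2*c-c+1)^2*y1^2)*haA + ((b^2*c-c+1)*b^2*y4^2)*hfA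
          obtain ⟨z1, _⟩ := nsq_aux hcd T7
          exact hy1 ((mul_eq_zero.mp z1).resolve_left (mul_ne_zero hd0 hP0))
    · have w1 : r1 = 0 := (mul_eq_zero.mp hry1).resolve_right hy3
      have w2 : r2 = 0 := sq_eq_zero_iff.mp (by linear_combination e1 + r3*w1)
      by_cases hy1 : y1 = 0
      · subst hy1
        by_cases hu1 : u1 = 0
        · subst hu1
          have hu3z : u3 = 0 := by
            have h0 : (a+c-1)*u3^2 = 0 := by linear_combination -F1
            exact sq_eq_zero_iff.mp ((mul_eq_zero.mp h0).resolve_left hf0)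
          subst hu3z
          have hE : c*(a*b^2-a-b^2)*u2^2 + (a+c-1)*u4^2 = 0 := by
            have hz : a*b^2*(c*(a*b^2-a-b^2)*u2^2 + (a+c-1)*u4^2) = 0 := by
              linear_combination w1 - hr1
            exact (mul_eq_zero.mp hz).resolve_left hab2
          have hu4 : u4 ≠ 0 := by
            intro h
            have h4 : c*(a*b^2-a-b^2)*u2^2 = 0 := by
              linear_combination hE - ((a+c-1)*u4)*h
            have hu2z : u2 = 0 := sq_eq_zero_iff.mp
              ((mul_eq_zero.mp h4).resolve_left (mul_ne_zero hc0 he0))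
            exact hu (by rw [h, hu2z])
          have hs4z : s4 = 0 := by
            have h0 : u4*s4 = 0 := by linear_combination e5
            exact (mul_eq_zero.mp h0).resolve_left hu4
          have hs5z : s5 = 0 := by
            have h0 : u4*s5 = 0 := by linear_combination e6
            exact (mul_eq_zero.mp h0).resolve_left hu4
          have hy4z : y4 = 0 := by
            have h0 : a*b*c*(b^2*c+a)*(y3*y4) = 0 := by linear_combination hs5 - hs5z
            have h1 := (mul_eq_zero.mp h0).resolve_left
              (mul_ne_zero (mul_ne_zero (mul_ne_zero ha0 hb0) hc0) hg0)
            exact (mul_eq_zero.mp h1).resolve_left hy3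
          subst hy4z
          have ha2f : a*y2^2 = (a+c-1)*y3^2 := by
            have hz : a*b^2*c*(a*y2^2 - (a+c-1)*y3^2) = 0 := by
              linear_combination hs4z - hs4
            have h := (mul_eq_zero.mp hz).resolve_left hab2c
            linear_combination h
          have sqc : ((fa^2-2*fa*c+c)*y2)^2 = c*((fa^2-2*fa+c)*y3)^2 := by
            linear_combination (-(y2^2))*haA + y3^2*hfA + (fa^2-c)^2*ha2f
          obtain ⟨_, z2⟩ := nsq_aux hc sqc
          exact hy3 ((mul_eq_zero.mp z2).resolve_left hQ0)
        · exact hu1 (keyRR w1 w2)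
      · have w3 : r3 = 0 := by
          have h0 : y1*r3 = 0 := by linear_combination -e8 + y2*w2
          exact (mul_eq_zero.mp h0).resolve_left hy1
        have h24 : a*u2^2 = u4^2 := by
          have hz : b^2*c*(a+c-1)*(u4^2 - a*u2^2) = 0 := by
            linear_combination w3 - hr3 + (a*(b^2*c-c+1))*F1
          have h := (mul_eq_zero.mp hz).resolve_left
            (mul_ne_zero (mul_ne_zero hb2 hc0) hf0)
          linear_combination -h
        have h2c : a*u2^2 = c*u1^2 := by
          have hz : b^2*(a-1)*(b^2*c+a)*(a*u2^2 - c*u1^2) = 0 := by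
            linear_combination w1 - hr1 + (a*b^2*(a+c-1))*h24 - (b^2*c*(a*b^2-a-b^2))*F1
          have h := (mul_eq_zero.mp hz).resolve_left
            (mul_ne_zero (mul_ne_zero hb2 ha1) hg0)
          linear_combination h
        have sqc : ((fa^2-2*fa*c+c)*u2)^2 = c*((fa^2-c)*u1)^2 := by
          linear_combination (-(u2^2))*haA + (fa^2-c)^2*h2c
        obtain ⟨z1, z2⟩ := nsq_aux hc sqc
        have hu2z : u2 = 0 := (mul_eq_zero.mp z1).resolve_left hP0
        have hu1z : u1 = 0 := (mul_eq_zero.mp z2).resolve_left hA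
        have hu4z : u4 = 0 := sq_eq_zero_iff.mp (by rw [← h24, hu2z]; ring)
        have hu3z : u3 = 0 := by
          have h0 : (a+c-1)*u3^2 = 0 := by linear_combination -F1 + (c*u1)*hu1z
          exact sq_eq_zero_iff.mp ((mul_eq_zero.mp h0).resolve_left hf0)
        exact hu (by rw [hu1z, hu2z, hu3z, hu4z])
  -- =========================== part 2 : the y-statement ===========================
  have HY : c * y1 - δ * y3 ≠ 0 := by
    intro H
    have F1y : c * y1^2 = (a + c - 1) * y3^2 :=
      mul_left_cancel₀ hc0 (by linear_combination (c*y1 + δ*y3) * H + y3^2 * hδ2)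
    have keyY : u2 = 0 → u3 = 0 → False := by
      intro k2 k3
      subst k2; subst k3
      have hu1 : u1 ≠ 0 := by
        intro h
        exact HU (by rw [h]; ring)
      have w2 : r2 = 0 := by rw [hr2]; ring
      have h13 : r1 * r3 = 0 := by linear_combination -e1 + r2 * w2
      rcases mul_eq_zero.mp h13 with w1 | w3
      · have hz : a*b^2*(a+c-1)*(u4^2 - c*u1^2) = 0 := by
          linear_combination w1 - hr1
        have h4 : u4^2 = c*u1^2 := by
          have h := (mul_eq_zero.mp hz).resolve_left (mul_ne_zero hab2 hf0)
          linear_combination h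
        obtain ⟨_, z2⟩ := nsq_aux hc h4
        exact hu1 z2
      · have hz : c*(a*(b^2*c-c+1)*u1^2 - b^2*(a+c-1)*u4^2) = 0 := by
          linear_combination hr3 - w3
        have hDf : a*(b^2*c-c+1)*u1^2 = b^2*(a+c-1)*u4^2 := by
          have h := (mul_eq_zero.mp hz).resolve_left hc0
          linear_combination h
        have T7 : ((b^2*c-c+1)*(fa^2-2*fa*c+c)*u1)^2
            = (c * (b^2*c-c+1)) * ((b*(fa^2-2*fa+c))*u4)^2 := by
          linear_combination ((b^2*c-c+1)*(fa^2-c)^2)*hDf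
            - ((b^2*c-c+1)^2*u1^2)*haA + ((b^2*c-c+1)*b^2*u4^2)*hfA
        obtain ⟨z1, _⟩ := nsq_aux hcd T7
        exact hu1 ((mul_eq_zero.mp z1).resolve_left (mul_ne_zero hd0 hP0))
    by_cases hy3 : y3 = 0
    · subst hy3
      have hy1z : y1 = 0 := by
        have h0 : c*y1 = 0 := by linear_combination H
        exact (mul_eq_zero.mp h0).resolve_left hc0
      subst hy1z
      have hs2z : s2 = 0 := by rw [hs2]; ring
      have hs5z : s5 = 0 := by rw [hs5]; ring
      have h13s : s1*s3 = 0 := by linear_combination -e2 + s2*hs2z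
      by_cases z3 : s3 = 0
      · have hy24 : a*y2^2 = y4^2 := by
          have hz : b^2*c*(a+c-1)*(y4^2 - a*y2^2) = 0 := by linear_combination z3 - hs3
          have h := (mul_eq_zero.mp hz).resolve_left
            (mul_ne_zero (mul_ne_zero hb2 hc0) hf0)
          linear_combination -h
        have hy2 : y2 ≠ 0 := by
          intro h
          have h4 : y4 = 0 := sq_eq_zero_iff.mp (by rw [← hy24, h]; ring)
          exact hy (by rw [h, h4])
        have hs1v : s1 = a*b^2*(a-1)*(b^2*c+a)*y2^2 := by
          linear_combination hs1 - (a*b^2*(a+c-1))*hy24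
        have hs6v : s6 = -(a*b^2*c*(a-1)*(b^2*c+a)*y2^2) := by
          linear_combination hs6 + (a*b^2*c*(a+c-1))*hy24
        have hs1nz : s1 ≠ 0 := by
          rw [hs1v]
          exact mul_ne_zero (mul_ne_zero (mul_ne_zero hab2 ha1) hg0) (pow_ne_zero 2 hy2)
        have hs6nz : s6 ≠ 0 := by
          rw [hs6v]
          exact neg_ne_zero.mpr
            (mul_ne_zero (mul_ne_zero (mul_ne_zero hab2c ha1) hg0) (pow_ne_zero 2 hy2))
        have hu2z : u2 = 0 := by
          have h0 : u2*s1 = 0 := by linear_combination e3 + u1*hs2z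
          exact (mul_eq_zero.mp h0).resolve_right hs1nz
        have hu3z : u3 = 0 := by
          have h0 : u3*s6 = 0 := by linear_combination -e6 + u4*hs5z
          exact (mul_eq_zero.mp h0).resolve_right hs6nz
        exact keyY hu2z hu3z
      · have z1 : s1 = 0 := (mul_eq_zero.mp h13s).resolve_right z3
        have hEy : c*(a*b^2-a-b^2)*y2^2 + (a+c-1)*y4^2 = 0 := by
          have hz : a*b^2*(c*(a*b^2-a-b^2)*y2^2 + (a+c-1)*y4^2) = 0 := by
            linear_combination z1 - hs1
          exact (mul_eq_zero.mp hz).resolve_left hab2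
        have hy2 : y2 ≠ 0 := by
          intro h
          have h4 : (a+c-1)*y4^2 = 0 := by
            linear_combination hEy - (c*(a*b^2-a-b^2)*y2)*h
          have hy4z : y4 = 0 := sq_eq_zero_iff.mp ((mul_eq_zero.mp h4).resolve_left hf0)
          exact hy (by rw [h, hy4z])
        have hu1z : u1 = 0 := by
          have h0 : u1*s3 = 0 := by linear_combination -e4 + u2*hs2z
          exact (mul_eq_zero.mp h0).resolve_right z3
        have hs4v : (a+c-1)*s4 + a*s3 = 0 := by
          linear_combination (a+c-1)*hs4 + a*hs3
        have hs4nz : s4 ≠ 0 := by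
          intro h
          apply z3
          have h0 : a*s3 = 0 := by linear_combination hs4v - (a+c-1)*h
          exact (mul_eq_zero.mp h0).resolve_left ha0
        have hu4z : u4 = 0 := by
          have h0 : u4*s4 = 0 := by linear_combination e5 + u3*hs5z
          exact (mul_eq_zero.mp h0).resolve_right hs4nz
        subst hu1z; subst hu4z
        have w1 : r1 = 0 := by
          have h0 : y2*r1 = 0 := by linear_combination e7
          exact (mul_eq_zero.mp h0).resolve_left hy2
        have ha23 : a*u2^2 = (a+c-1)*u3^2 := by
          have hz : b^2*c*(a*b^2-a-b^2)*(a*u2^2 - (a+c-1)*u3^2) = 0 := by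
            linear_combination w1 - hr1
          have h := (mul_eq_zero.mp hz).resolve_left
            (mul_ne_zero (mul_ne_zero hb2 hc0) he0)
          linear_combination h
        have sqc : ((fa^2-2*fa*c+c)*u2)^2 = c*((fa^2-2*fa+c)*u3)^2 := by
          linear_combination (-(u2^2))*haA + u3^2*hfA + (fa^2-c)^2*ha23
        obtain ⟨zz1, zz2⟩ := nsq_aux hc sqc
        have hu3z : u3 = 0 := (mul_eq_zero.mp zz2).resolve_left hQ0
        exact HU (by rw [hu3z]; ring)
    · have hz : b^2*c*(a-1)*(b^2*c+a)*(y3^2*(a*u2^2 - (a+c-1)*u3^2)) = 0 := by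
        linear_combination c*e11 - r4*F1y - (c*y3^2)*hr1 - ((a+c-1)*y3^2)*hr4
      have h1 := (mul_eq_zero.mp hz).resolve_left
        (mul_ne_zero (mul_ne_zero (mul_ne_zero hb2 hc0) ha1) hg0)
      have h23 : a*u2^2 = (a+c-1)*u3^2 := by
        have h2 := (mul_eq_zero.mp h1).resolve_left (pow_ne_zero 2 hy3)
        linear_combination h2
      have sqc : ((fa^2-2*fa*c+c)*u2)^2 = c*((fa^2-2*fa+c)*u3)^2 := by
        linear_combination (-(u2^2))*haA + u3^2*hfA + (fa^2-c)^2*h23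
      obtain ⟨zz1, zz2⟩ := nsq_aux hc sqc
      exact keyY ((mul_eq_zero.mp zz1).resolve_left hP0) ((mul_eq_zero.mp zz2).resolve_left hQ0)
  exact ⟨HU, HY⟩
end

section
/- Let (u1,u2,u3,u4) and (y1,y2,y3,y4) be nonzero vectors in K^4 satisfying all fifteen defining equations of the model, and suppose u1 = 0. Then each of u2, u3, u4, y1, y2, y3, y4 is nonzero. -/
private lemma isSquare_of_mul_sq {K : Type*} [Field K] {X u v : K} (hu : u ≠ 0)
    (h : X * u ^ 2 = v ^ 2) : IsSquare X :=
  ⟨v / u, by rw [div_mul_div_comm, eq_div_iff (mul_ne_zero hu hu)]; linear_combination h⟩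


/-- Let `(u1,u2,u3,u4)` and `(y1,y2,y3,y4)` be nonzero vectors in `K⁴`
satisfying all fifteen defining equations of the `ℙ³ × ℙ³` model, with
`a, c, d, −e, −cef, af, cd, adf, −ae, cf` all nonsquares in `K`, and suppose `u1 = 0`.
Then each of `u2, u3, u4, y1, y2, y3, y4` is nonzero. -/
theorem stmt_1 {K : Type*} [Field K] (hchar : (2 : K) ≠ 0)
    (a b c d e f g : K)
    (hd : d = b ^ 2 * c - c + 1)
    (he : e = a * b ^ 2 - a - b ^ 2)
    (hf : f = a + c - 1)
    (hg : g = b ^ 2 * c + a)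
    (hdisc : 2 * a * b * c * d * e * f * g * (a - 1) * (b ^ 2 - 1) * (c - 1) ≠ 0)
    (hna : ¬ IsSquare a)
    (hnc : ¬ IsSquare c)
    (hnd : ¬ IsSquare d)
    (hne : ¬ IsSquare (-e))
    (hncef : ¬ IsSquare (-(c * e * f)))
    (hnaf : ¬ IsSquare (a * f))
    (hncd : ¬ IsSquare (c * d))
    (hnadf : ¬ IsSquare (a * d * f))
    (hnae : ¬ IsSquare (-(a * e)))
    (hncf : ¬ IsSquare (c * f))
    (u1 u2 u3 u4 y1 y2 y3 y4 : K)
    (hu : (u1, u2, u3, u4) ≠ (0, 0, 0, 0))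
    (hy : (y1, y2, y3, y4) ≠ (0, 0, 0, 0))
    (r1 r2 r3 r4 r5 r6 s1 s2 s3 s4 s5 s6 : K)
    (hr1 : r1 = b ^ 2 * (a * c * (-f * u1 ^ 2 + e * u2 ^ 2) - c * e * f * u3 ^ 2 + a * f * u4 ^ 2))
    (hr2 : r2 = -(b * g) * (a * c * u1 * u2 - f * u3 * u4))
    (hr3 : r3 = -(a * c) * (d * u1 ^ 2 + b ^ 2 * f * u2 ^ 2) + f * (a * d * u3 ^ 2 + b ^ 2 * c * u4 ^ 2))
    (hr4 : r4 = a * b ^ 2 * c * (c * u1 ^ 2 + a * u2 ^ 2 - f * u3 ^ 2 - u4 ^ 2))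
    (hr5 : r5 = a * b * c * g * (u1 * u2 - u3 * u4))
    (hr6 : r6 = a * c * (a * d * u1 ^ 2 - b ^ 2 * c * e * u2 ^ 2 + d * e * u3 ^ 2 - b ^ 2 * f * u4 ^ 2))
    (hs1 : s1 = b ^ 2 * (a * c * (-f * y1 ^ 2 + e * y2 ^ 2) - c * e * f * y3 ^ 2 + a * f * y4 ^ 2))
    (hs2 : s2 = -(b * g) * (a * c * y1 * y2 - f * y3 * y4))
    (hs3 : s3 = -(a * c) * (d * y1 ^ 2 + b ^ 2 * f * y2 ^ 2) + f * (a * d * y3 ^ 2 + b ^ 2 * c * y4 ^ 2))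
    (hs4 : s4 = a * b ^ 2 * c * (c * y1 ^ 2 + a * y2 ^ 2 - f * y3 ^ 2 - y4 ^ 2))
    (hs5 : s5 = a * b * c * g * (y1 * y2 - y3 * y4))
    (hs6 : s6 = a * c * (a * d * y1 ^ 2 - b ^ 2 * c * e * y2 ^ 2 + d * e * y3 ^ 2 - b ^ 2 * f * y4 ^ 2))
    (e1 : r2 ^ 2 - r1 * r3 = 0)
    (e2 : s2 ^ 2 - s1 * s3 = 0)
    (e3 : u2 * s1 - u1 * s2 = 0)
    (e4 : u2 * s2 - u1 * s3 = 0)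
    (e5 : u4 * s4 - u3 * s5 = 0)
    (e6 : u4 * s5 - u3 * s6 = 0)
    (e7 : y2 * r1 - y1 * r2 = 0)
    (e8 : y2 * r2 - y1 * r3 = 0)
    (e9 : y4 * r4 - y3 * r5 = 0)
    (e10 : y4 * r5 - y3 * r6 = 0)
    (e11 : r1 * y3 ^ 2 + r4 * y1 ^ 2 = 0)
    (e12 : r1 * y4 ^ 2 + r6 * y1 ^ 2 = 0)
    (e13 : r2 * y3 * y4 + r5 * y1 * y2 = 0)
    (e14 : a * (b * u2 * y1 - u1 * y2) * (b * u4 * y3 - u3 * y4)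
            - (e * u3 * y2 + b * u4 * y1) * (b * u2 * y3 - u1 * y4) = 0)
    (e15 : c * (e * u3 * y3 + b * u4 * y4) * (b * u2 * y2 - u1 * y1)
            - f * (b * u2 * y4 - u1 * y3) * (b * u4 * y2 - u3 * y1) = 0)
    (hu1 : u1 = 0) :
    u2 ≠ 0 ∧ u3 ≠ 0 ∧ u4 ≠ 0 ∧ y1 ≠ 0 ∧ y2 ≠ 0 ∧ y3 ≠ 0 ∧ y4 ≠ 0 := by

  subst hd he hf hg hr1 hr2 hr3 hr4 hr5 hr6 hs1 hs2 hs3 hs4 hs5 hs6 hu1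
  have ha : a ≠ 0 := fun h => hdisc (by rw [h]; ring)
  have hb : b ≠ 0 := fun h => hdisc (by rw [h]; ring)
  have hc : c ≠ 0 := fun h => hdisc (by rw [h]; ring)
  have hD : b ^ 2 * c - c + 1 ≠ 0 := fun h => hdisc (by rw [h]; ring)
  have hE : a * b ^ 2 - a - b ^ 2 ≠ 0 := fun h => hdisc (by rw [h]; ring)
  have hF : a + c - 1 ≠ 0 := fun h => hdisc (by rw [h]; ring)
  have hG : b ^ 2 * c + a ≠ 0 := fun h => hdisc (by rw [h]; ring)
  -- Step A : u2 ≠ 0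
  have hu2 : u2 ≠ 0 := by
    intro h2
    subst h2
    have key : (u4 ^ 2 - (b ^ 2 * c - c + 1) * u3 ^ 2) *
        ((a * b ^ 2 - a - b ^ 2) * u3 ^ 2 + b ^ 2 * u4 ^ 2) = 0 := by
      have hC : a * b ^ 2 * c * (a + c - 1) ^ 2 ≠ 0 := by
        exact mul_ne_zero (mul_ne_zero (mul_ne_zero ha (pow_ne_zero 2 hb)) hc) (pow_ne_zero 2 hF)
      have key' : a * b ^ 2 * c * (a + c - 1) ^ 2 *
          ((u4 ^ 2 - (b ^ 2 * c - c + 1) * u3 ^ 2) *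
            ((a * b ^ 2 - a - b ^ 2) * u3 ^ 2 + b ^ 2 * u4 ^ 2)) = 0 := by
        linear_combination -e1
      exact (mul_eq_zero.mp key').resolve_left hC
    rcases mul_eq_zero.mp key with h | h
    · rcases eq_or_ne u3 0 with h3 | h3
      · subst h3
        have h4 : u4 = 0 := by
          have : u4 ^ 2 = 0 := by linear_combination h
          exact (pow_eq_zero_iff (two_ne_zero)).mp this
        subst h4
        exact hu rfl
      · exact hnd (isSquare_of_mul_sq h3 (v := u4) (by linear_combination -h))
    · rcases eq_or_ne u3 0 with h3 | h3
      · subst h3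
        have h4 : u4 = 0 := by
          have h4' : (b * u4) ^ 2 = 0 := by linear_combination h
          have := (pow_eq_zero_iff (two_ne_zero)).mp h4'
          rcases mul_eq_zero.mp this with hb0 | h4
          · exact absurd hb0 hb
          · exact h4
        subst h4
        exact hu rfl
      · exact hne (isSquare_of_mul_sq h3 (v := b * u4) (by linear_combination -h))
  -- Step B : u3 ≠ 0
  have hu3 : u3 ≠ 0 := by
    intro h3
    subst h3
    have key : (c * (a * b ^ 2 - a - b ^ 2) * u2 ^ 2 + (a + c - 1) * u4 ^ 2) *
        (u4 ^ 2 - a * u2 ^ 2) = 0 := by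
      have hC : a * b ^ 4 * c * (a + c - 1) ≠ 0 := by
        exact mul_ne_zero (mul_ne_zero (mul_ne_zero ha (pow_ne_zero 4 hb)) hc) hF
      have key' : a * b ^ 4 * c * (a + c - 1) *
          ((c * (a * b ^ 2 - a - b ^ 2) * u2 ^ 2 + (a + c - 1) * u4 ^ 2) *
            (u4 ^ 2 - a * u2 ^ 2)) = 0 := by
        linear_combination -e1
      exact (mul_eq_zero.mp key').resolve_left hC
    rcases mul_eq_zero.mp key with h | h
    · exact hncef (isSquare_of_mul_sq hu2 (v := (a + c - 1) * u4) (by linear_combination -(a + c - 1) * h))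
    · exact hna (isSquare_of_mul_sq hu2 (v := u4) (by linear_combination -h))
  -- Step C : u4 ≠ 0
  have hu4 : u4 ≠ 0 := by
    intro h4
    subst h4
    have key : (a * u2 ^ 2 - (a + c - 1) * u3 ^ 2) *
        ((b ^ 2 * c - c + 1) * u3 ^ 2 - b ^ 2 * c * u2 ^ 2) = 0 := by
      have hC : a * b ^ 2 * c * (a * b ^ 2 - a - b ^ 2) * (a + c - 1) ≠ 0 := by
        exact mul_ne_zero (mul_ne_zero (mul_ne_zero (mul_ne_zero ha (pow_ne_zero 2 hb)) hc) hE) hF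
      have key' : a * b ^ 2 * c * (a * b ^ 2 - a - b ^ 2) * (a + c - 1) *
          ((a * u2 ^ 2 - (a + c - 1) * u3 ^ 2) *
            ((b ^ 2 * c - c + 1) * u3 ^ 2 - b ^ 2 * c * u2 ^ 2)) = 0 := by
        linear_combination -e1
      exact (mul_eq_zero.mp key').resolve_left hC
    rcases mul_eq_zero.mp key with h | h
    · exact hnaf (isSquare_of_mul_sq hu3 (v := a * u2) (by linear_combination -a * h))
    · exact hncd (isSquare_of_mul_sq hu3 (v := b * c * u2) (by linear_combination c * h))
  -- s1 = 0 and s2 = 0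
  have hs1z : b ^ 2 * (a * c * (-(a + c - 1) * y1 ^ 2 + (a * b ^ 2 - a - b ^ 2) * y2 ^ 2)
      - c * (a * b ^ 2 - a - b ^ 2) * (a + c - 1) * y3 ^ 2 + a * (a + c - 1) * y4 ^ 2) = 0 := by
    have h := mul_eq_zero.mp (show u2 * (b ^ 2 * (a * c * (-(a + c - 1) * y1 ^ 2
        + (a * b ^ 2 - a - b ^ 2) * y2 ^ 2)
        - c * (a * b ^ 2 - a - b ^ 2) * (a + c - 1) * y3 ^ 2
        + a * (a + c - 1) * y4 ^ 2)) = 0 from by linear_combination e3)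
    exact h.resolve_left hu2
  have hs2z : a * c * y1 * y2 - (a + c - 1) * y3 * y4 = 0 := by
    have h := mul_eq_zero.mp (show (u2 * (b * (b ^ 2 * c + a))) *
        (a * c * y1 * y2 - (a + c - 1) * y3 * y4) = 0 from by linear_combination -e4)
    exact h.resolve_left (mul_ne_zero hu2 (mul_ne_zero hb hG))
  -- Step D : y1 ≠ 0
  have hy1 : y1 ≠ 0 := by
    intro h1
    subst h1
    have h34 : y3 * y4 = 0 := by
      have h := mul_eq_zero.mp (show (a + c - 1) * (y3 * y4) = 0 from by
        linear_combination -hs2z)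
      exact h.resolve_left hF
    rcases mul_eq_zero.mp h34 with h3 | h4
    · subst h3
      have hk : c * (a * b ^ 2 - a - b ^ 2) * y2 ^ 2 + (a + c - 1) * y4 ^ 2 = 0 := by
        have h := mul_eq_zero.mp (show (a * b ^ 2) *
            (c * (a * b ^ 2 - a - b ^ 2) * y2 ^ 2 + (a + c - 1) * y4 ^ 2) = 0 from by
          linear_combination hs1z)
        exact h.resolve_left (mul_ne_zero ha (pow_ne_zero 2 hb))
      rcases eq_or_ne y2 0 with h2 | h2
      · subst h2
        have h4 : y4 = 0 := by
          have h4' : y4 ^ 2 = 0 := by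
            have h := mul_eq_zero.mp (show (a + c - 1) * y4 ^ 2 = 0 from by
              linear_combination hk)
            exact h.resolve_left hF
          exact (pow_eq_zero_iff (two_ne_zero)).mp h4'
        subst h4
        exact hy rfl
      · exact hncef (isSquare_of_mul_sq h2 (v := (a + c - 1) * y4) (by linear_combination -(a + c - 1) * hk))
    · subst h4
      have hk : a * y2 ^ 2 - (a + c - 1) * y3 ^ 2 = 0 := by
        have h := mul_eq_zero.mp (show (b ^ 2 * c * (a * b ^ 2 - a - b ^ 2)) *
            (a * y2 ^ 2 - (a + c - 1) * y3 ^ 2) = 0 from by linear_combination hs1z)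
        exact h.resolve_left (mul_ne_zero (mul_ne_zero (pow_ne_zero 2 hb) hc) hE)
      rcases eq_or_ne y3 0 with h3 | h3
      · subst h3
        have h2 : y2 = 0 := by
          have h2' : y2 ^ 2 = 0 := by
            have h := mul_eq_zero.mp (show a * y2 ^ 2 = 0 from by linear_combination hk)
            exact h.resolve_left ha
          exact (pow_eq_zero_iff (two_ne_zero)).mp h2'
        subst h2
        exact hy rfl
      · exact hnaf (isSquare_of_mul_sq h3 (v := a * y2) (by linear_combination -a * hk))
  -- Step E : y2 ≠ 0
  have hy2 : y2 ≠ 0 := by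
    intro h2
    subst h2
    have h34 : y3 * y4 = 0 := by
      have h := mul_eq_zero.mp (show (a + c - 1) * (y3 * y4) = 0 from by
        linear_combination -hs2z)
      exact h.resolve_left hF
    rcases mul_eq_zero.mp h34 with h3 | h4
    · subst h3
      have hk : y4 ^ 2 - c * y1 ^ 2 = 0 := by
        have h := mul_eq_zero.mp (show (a * b ^ 2 * (a + c - 1)) *
            (y4 ^ 2 - c * y1 ^ 2) = 0 from by linear_combination hs1z)
        exact h.resolve_left (mul_ne_zero (mul_ne_zero ha (pow_ne_zero 2 hb)) hF)
      exact hnc (isSquare_of_mul_sq hy1 (v := y4) (by linear_combination -hk))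
    · subst h4
      have hk : a * y1 ^ 2 + (a * b ^ 2 - a - b ^ 2) * y3 ^ 2 = 0 := by
        have h := mul_eq_zero.mp (show (b ^ 2 * c * (a + c - 1)) *
            (a * y1 ^ 2 + (a * b ^ 2 - a - b ^ 2) * y3 ^ 2) = 0 from by
          linear_combination -hs1z)
        exact h.resolve_left (mul_ne_zero (mul_ne_zero (pow_ne_zero 2 hb) hc) hF)
      rcases eq_or_ne y3 0 with h3 | h3
      · have h1' : y1 = 0 := by
          have h1'' : y1 ^ 2 = 0 := by
            have h := mul_eq_zero.mp (show a * y1 ^ 2 = 0 from by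
              linear_combination hk - (a * b ^ 2 - a - b ^ 2) * y3 * h3)
            exact h.resolve_left ha
          exact (pow_eq_zero_iff (two_ne_zero)).mp h1''
        exact hy1 h1'
      · exact hnae (isSquare_of_mul_sq h3 (v := a * y1) (by linear_combination -a * hk))
  -- Step F : y3 ≠ 0 and y4 ≠ 0
  have hy3 : y3 ≠ 0 := by
    intro h3
    have h := mul_eq_zero.mp (show (a * c * y1) * y2 = 0 from by
      linear_combination hs2z + (a + c - 1) * y4 * h3)
    rcases h with h | h
    · exact (mul_ne_zero (mul_ne_zero ha hc) hy1) h
    · exact hy2 h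
  have hy4 : y4 ≠ 0 := by
    intro h4
    have h := mul_eq_zero.mp (show (a * c * y1) * y2 = 0 from by
      linear_combination hs2z + (a + c - 1) * y3 * h4)
    rcases h with h | h
    · exact (mul_ne_zero (mul_ne_zero ha hc) hy1) h
    · exact hy2 h
  exact ⟨hu2, hu3, hu4, hy1, hy2, hy3, hy4⟩
end

section
/- Define A = s00·Ŝ00 + s10·Ŝ10 − s01·Ŝ01 − s11·Ŝ11, B = t0·T̂0 + t1·T̂1, C = s00·Ŝ00 + s10·Ŝ10 + s01·Ŝ01 + s11·Ŝ11, D = s00·Ŝ00 − s10·Ŝ10 − s01·Ŝ01 + s11·Ŝ11, E = t0·T̂0 − t1·T̂1, F = s00·Ŝ00 − s10·Ŝ10 + s01·Ŝ01 − s11·Ŝ11. Then AC − B² = DF − E², and this common value equals s00²·Ŝ00² + s10²·Ŝ10² − s01²·Ŝ01² − s11²·Ŝ11² − t0²·T̂0² − t1²·T̂1², which equals (s00²/s10²)(P00² − P10² + P01² − P11²)² + (s10²/s00²)(P00² + P10² + P01² + P11²)² − (s01²/s11²)(P00² − P10² − P01² + P11²)² − (s11²/s01²)(P00² + P10² − P01²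 − P11²)² − 4(t0²/t1²)(P00P01 − P10P11)² − 4(t1²/t0²)(P00P01 + P10P11)². -/
/-- With `Ŝ00 = s10⁻¹(P00² − P10² + P01² − P11²)`, etc., and
`A = s00 Ŝ00 + s10 Ŝ10 − s01 Ŝ01 − s11 Ŝ11`, ..., `F = s00 Ŝ00 − s10 Ŝ10 + s01 Ŝ01 − s11 Ŝ11`,
we have `AC − B² = DF − E²`, and this common value equals
`s00² Ŝ00² + s10² Ŝ10² − s01² Ŝ01² − s11² Ŝ11² − t0² T̂0² − t1² T̂1²`, which in turn equals the
explicit quartic expression in `P00, P10, P01, P11`. -/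
theorem stmt_4 {K : Type*} [Field K] (hchar : (2 : K) ≠ 0)
    (s00 s10 s01 s11 t0 t1 : K)
    (hs00 : s00 ≠ 0) (hs10 : s10 ≠ 0) (hs01 : s01 ≠ 0) (hs11 : s11 ≠ 0)
    (ht0 : t0 ≠ 0) (ht1 : t1 ≠ 0)
    (P00 P10 P01 P11 : K) :
    let S00 := s10⁻¹ * (P00 ^ 2 - P10 ^ 2 + P01 ^ 2 - P11 ^ 2)
    let S10 := s00⁻¹ * (P00 ^ 2 + P10 ^ 2 + P01 ^ 2 + P11 ^ 2)
    let S01 := s11⁻¹ * (P00 ^ 2 - P10 ^ 2 - P01 ^ 2 + P11 ^ 2)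
    let S11 := s01⁻¹ * (P00 ^ 2 + P10 ^ 2 - P01 ^ 2 - P11 ^ 2)
    let T0 := t1⁻¹ * (2 * (P00 * P01 - P10 * P11))
    let T1 := t0⁻¹ * (2 * (P00 * P01 + P10 * P11))
    let A := s00 * S00 + s10 * S10 - s01 * S01 - s11 * S11
    let B := t0 * T0 + t1 * T1
    let C := s00 * S00 + s10 * S10 + s01 * S01 + s11 * S11
    let D := s00 * S00 - s10 * S10 - s01 * S01 + s11 * S11
    let E := t0 * T0 - t1 * T1
    let F := s00 * S00 - s10 * S10 + s01 * S01 - s11 * S11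
    A * C - B ^ 2 = D * F - E ^ 2 ∧
    A * C - B ^ 2 =
      s00 ^ 2 * S00 ^ 2 + s10 ^ 2 * S10 ^ 2 - s01 ^ 2 * S01 ^ 2 - s11 ^ 2 * S11 ^ 2
        - t0 ^ 2 * T0 ^ 2 - t1 ^ 2 * T1 ^ 2 ∧
    A * C - B ^ 2 =
      (s00 ^ 2 / s10 ^ 2) * (P00 ^ 2 - P10 ^ 2 + P01 ^ 2 - P11 ^ 2) ^ 2
        + (s10 ^ 2 / s00 ^ 2) * (P00 ^ 2 + P10 ^ 2 + P01 ^ 2 + P11 ^ 2) ^ 2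
        - (s01 ^ 2 / s11 ^ 2) * (P00 ^ 2 - P10 ^ 2 - P01 ^ 2 + P11 ^ 2) ^ 2
        - (s11 ^ 2 / s01 ^ 2) * (P00 ^ 2 + P10 ^ 2 - P01 ^ 2 - P11 ^ 2) ^ 2
        - 4 * (t0 ^ 2 / t1 ^ 2) * (P00 * P01 - P10 * P11) ^ 2
        - 4 * (t1 ^ 2 / t0 ^ 2) * (P00 * P01 + P10 * P11) ^ 2 := by
  intro S00 S10 S01 S11 T0 T1 A B C D E F
  have h1 : (s00 * S00) * (s10 * S10) =
      (P00 ^ 2 - P10 ^ 2 + P01 ^ 2 - P11 ^ 2) * (P00 ^ 2 + P10 ^ 2 + P01 ^ 2 + P11 ^ 2) := by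
    simp only [S00, S10]; field_simp
  have h2 : (s01 * S01) * (s11 * S11) =
      (P00 ^ 2 - P10 ^ 2 - P01 ^ 2 + P11 ^ 2) * (P00 ^ 2 + P10 ^ 2 - P01 ^ 2 - P11 ^ 2) := by
    simp only [S01, S11]; field_simp
  have h3 : (t0 * T0) * (t1 * T1) =
      4 * ((P00 * P01 - P10 * P11) * (P00 * P01 + P10 * P11)) := by
    simp only [T0, T1]; field_simp; ring
  have h4 : (s00 * S00) ^ 2 = (s00 ^ 2 / s10 ^ 2) * (P00 ^ 2 - P10 ^ 2 + P01 ^ 2 - P11 ^ 2) ^ 2 := by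
    simp only [S00]; field_simp
  have h5 : (s10 * S10) ^ 2 = (s10 ^ 2 / s00 ^ 2) * (P00 ^ 2 + P10 ^ 2 + P01 ^ 2 + P11 ^ 2) ^ 2 := by
    simp only [S10]; field_simp
  have h6 : (s01 * S01) ^ 2 = (s01 ^ 2 / s11 ^ 2) * (P00 ^ 2 - P10 ^ 2 - P01 ^ 2 + P11 ^ 2) ^ 2 := by
    simp only [S01]; field_simp
  have h7 : (s11 * S11) ^ 2 = (s11 ^ 2 / s01 ^ 2) * (P00 ^ 2 + P10 ^ 2 - P01 ^ 2 - P11 ^ 2) ^ 2 := by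
    simp only [S11]; field_simp
  have h8 : (t0 * T0) ^ 2 = 4 * (t0 ^ 2 / t1 ^ 2) * (P00 * P01 - P10 * P11) ^ 2 := by
    simp only [T0]; field_simp; ring
  have h9 : (t1 * T1) ^ 2 = 4 * (t1 ^ 2 / t0 ^ 2) * (P00 * P01 + P10 * P11) ^ 2 := by
    simp only [T1]; field_simp; ring
  refine ⟨?_, ?_, ?_⟩
  · show (s00 * S00 + s10 * S10 - s01 * S01 - s11 * S11) *
        (s00 * S00 + s10 * S10 + s01 * S01 + s11 * S11) - (t0 * T0 + t1 * T1) ^ 2 =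
      (s00 * S00 - s10 * S10 - s01 * S01 + s11 * S11) *
        (s00 * S00 - s10 * S10 + s01 * S01 - s11 * S11) - (t0 * T0 - t1 * T1) ^ 2
    linear_combination 4 * h1 - 4 * h2 - 4 * h3
  · show (s00 * S00 + s10 * S10 - s01 * S01 - s11 * S11) *
        (s00 * S00 + s10 * S10 + s01 * S01 + s11 * S11) - (t0 * T0 + t1 * T1) ^ 2 = _
    linear_combination 2 * h1 - 2 * h2 - 2 * h3
  · show (s00 * S00 + s10 * S10 - s01 * S01 - s11 * S11) *
        (s00 * S00 + s10 * S10 + s01 * S01 + s11 * S11) - (t0 * T0 + t1 * T1) ^ 2 = _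
    linear_combination 2 * h1 - 2 * h2 - 2 * h3 + h4 + h5 - h6 - h7 - h8 - h9
end

section
/- Suppose that the quartic polynomial Σ in the four variables P00, P10, P01, P11 is identically zero (i.e., is the zero polynomial). Then either q10 = q11 = 0 or q00 = q01 = 0. -/
open MvPolynomial

/-- If the quartic polynomial `Σ` (in the four variables
`P00, P10, P01, P11`, here `X 0, X 1, X 2, X 3`) built from the Thetanullwerte relations is
the zero polynomial, then either `q10 = q11 = 0` or `q00 = q01 = 0`. -/
theorem stmt_5 {K : Type*} [Field K] (hchar : (2 : K) ≠ 0)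
    (q00 q10 q01 q11 s00 s10 s01 s11 t0 t1 : K)
    (hs00 : s00 ≠ 0) (hs10 : s10 ≠ 0) (hs01 : s01 ≠ 0) (hs11 : s11 ≠ 0)
    (ht0 : t0 ≠ 0) (ht1 : t1 ≠ 0)
    (h1 : s00 ^ 2 = q00 ^ 2 + q10 ^ 2 + q01 ^ 2 + q11 ^ 2)
    (h2 : s10 ^ 2 = q00 ^ 2 - q10 ^ 2 + q01 ^ 2 - q11 ^ 2)
    (h3 : s01 ^ 2 = q00 ^ 2 + q10 ^ 2 - q01 ^ 2 - q11 ^ 2)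
    (h4 : s11 ^ 2 = q00 ^ 2 - q10 ^ 2 - q01 ^ 2 + q11 ^ 2)
    (h5 : t0 ^ 2 = 2 * (q00 * q01 + q10 * q11))
    (h6 : t1 ^ 2 = 2 * (q00 * q01 - q10 * q11))
    (hSigma : (C (s00 ^ 2 / s10 ^ 2) *
            ((X 0 : MvPolynomial (Fin 4) K) ^ 2 - X 1 ^ 2 + X 2 ^ 2 - X 3 ^ 2) ^ 2
          + C (s10 ^ 2 / s00 ^ 2) * (X 0 ^ 2 + X 1 ^ 2 + X 2 ^ 2 + X 3 ^ 2) ^ 2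
          - C (s01 ^ 2 / s11 ^ 2) * (X 0 ^ 2 - X 1 ^ 2 - X 2 ^ 2 + X 3 ^ 2) ^ 2
          - C (s11 ^ 2 / s01 ^ 2) * (X 0 ^ 2 + X 1 ^ 2 - X 2 ^ 2 - X 3 ^ 2) ^ 2
          - C (4 * (t0 ^ 2 / t1 ^ 2)) * (X 0 * X 2 - X 1 * X 3) ^ 2
          - C (4 * (t1 ^ 2 / t0 ^ 2)) * (X 0 * X 2 + X 1 * X 3) ^ 2) = 0) :
    (q10 = 0 ∧ q11 = 0) ∨ (q00 = 0 ∧ q01 = 0) := by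
  have key : ∀ p0 p1 p2 p3 : K,
      (s00^2/s10^2)*(p0^2-p1^2+p2^2-p3^2)^2 + (s10^2/s00^2)*(p0^2+p1^2+p2^2+p3^2)^2
      - (s01^2/s11^2)*(p0^2-p1^2-p2^2+p3^2)^2 - (s11^2/s01^2)*(p0^2+p1^2-p2^2-p3^2)^2
      - 4*(t0^2/t1^2)*(p0*p2-p1*p3)^2 - 4*(t1^2/t0^2)*(p0*p2+p1*p3)^2 = 0 := by
    intro p0 p1 p2 p3
    have := congrArg (eval ![p0,p1,p2,p3]) hSigma
    simpa using this
  have hs002 : s00^2 ≠ 0 := pow_ne_zero _ hs00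
  have hs102 : s10^2 ≠ 0 := pow_ne_zero _ hs10
  have hs012 : s01^2 ≠ 0 := pow_ne_zero _ hs01
  have hs112 : s11^2 ≠ 0 := pow_ne_zero _ hs11
  have h4ne : (4:K) ≠ 0 := by
    have := mul_ne_zero hchar hchar
    norm_num at this ⊢
    exact this
  have k1 := key 1 0 0 0
  have k2 := key 1 1 0 0
  have k3 := key 1 0 0 1
  norm_num at k1 k2 k3
  have k2' : s10^2/s00^2 = s11^2/s01^2 := by
    apply mul_right_cancel₀ h4ne; linear_combination k2
  have k3' : s10^2/s00^2 = s01^2/s11^2 := by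
    apply mul_right_cancel₀ h4ne; linear_combination k3
  have k1' : s00^2/s10^2 = s10^2/s00^2 := by linear_combination k1 - k2' - k3'
  have kcd : s01^2/s11^2 = s11^2/s01^2 := k3'.symm.trans k2'
  have hbc : s10^2 * s11^2 = s01^2 * s00^2 := (div_eq_div_iff hs002 hs112).mp k3'
  have hab : s00^2 * s00^2 = s10^2 * s10^2 := (div_eq_div_iff hs102 hs002).mp k1'
  have hcd : s01^2 * s01^2 = s11^2 * s11^2 := (div_eq_div_iff hs112 hs012).mp kcd
  rw [h1, h2] at hab
  rw [h3, h4] at hcd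
  rw [h2, h4, h3, h1] at hbc
  -- equations in the q's
  have F1 : (q00^2 + q01^2) * (q10^2 + q11^2) = 0 := by
    apply mul_left_cancel₀ h4ne; linear_combination hab
  have F2 : (q00^2 - q01^2) * (q10^2 - q11^2) = 0 := by
    apply mul_left_cancel₀ h4ne; linear_combination hcd
  have F3 : q00^2 * q10^2 - q01^2 * q11^2 = 0 := by
    apply mul_left_cancel₀ h4ne; linear_combination -hbc
  have sqz : ∀ x : K, x^2 = 0 → x = 0 := fun x hx =>
    pow_eq_zero_iff (two_ne_zero) |>.mp hx
  rcases mul_eq_zero.mp F1 with h | h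
  · -- q00^2 + q01^2 = 0
    have hu : q00^2 * (q10^2 + q11^2) = 0 := by
      linear_combination F3 + q11^2 * h
    rcases mul_eq_zero.mp hu with h0 | h0
    · exact Or.inr ⟨sqz _ h0, sqz _ (by linear_combination h - h0)⟩
    · have hv : q00^2 * q10^2 = 0 := by
        apply mul_left_cancel₀ h4ne
        linear_combination F2 + (q10^2 - q11^2) * h + 2 * q00^2 * h0
      rcases mul_eq_zero.mp hv with h1' | h1'
      · exact Or.inr ⟨sqz _ h1', sqz _ (by linear_combination h - h1')⟩
      · exact Or.inl ⟨sqz _ h1', sqz _ (by linear_combination h0 - h1')⟩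
  · -- q10^2 + q11^2 = 0
    have hu : q10^2 * (q00^2 + q01^2) = 0 := by
      linear_combination F3 + q01^2 * h
    rcases mul_eq_zero.mp hu with h0 | h0
    · exact Or.inl ⟨sqz _ h0, sqz _ (by linear_combination h - h0)⟩
    · have hv : q00^2 * q10^2 = 0 := by
        apply mul_left_cancel₀ h4ne
        linear_combination F2 + (q10^2 - q11^2) * h0 + 2 * q00^2 * h
      rcases mul_eq_zero.mp hv with h1' | h1'
      · exact Or.inr ⟨sqz _ h1', sqz _ (by linear_combination h0 - h1')⟩
      · exact Or.inl ⟨sqz _ h1', sqz _ (by linear_combination h - h1')⟩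
end

section
/- Let U, Y, V, Z ∈ K satisfy U² + Y² = 1 + d·U²Y² and V² + Z² = 1 + d·V²Z². Then 1 − d·U·V·Y·Z ≠ 0 and 1 + d·U·V·Y·Z ≠ 0. -/
lemma edwards_aux {K : Type*} [Field K] (hchar : (2 : K) ≠ 0) (d : K) (hd : ¬ IsSquare d)
    (U Y V Z e : K)
    (h1 : U ^ 2 + Y ^ 2 = 1 + d * U ^ 2 * Y ^ 2)
    (h2 : V ^ 2 + Z ^ 2 = 1 + d * V ^ 2 * Z ^ 2)
    (hε : e ^ 2 = 1) (he : d * U * V * Y * Z = e) : False := by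
  have he0 : e ≠ 0 := by
    intro h; rw [h] at hε; simp at hε
  have hne : d * U * V * Y * Z ≠ 0 := by rw [he]; exact he0
  have hU : U ≠ 0 := by intro h; apply hne; rw [h]; ring
  have hY : Y ≠ 0 := by intro h; apply hne; rw [h]; ring
  by_cases hvz : V + e * Z = 0
  · by_cases hvz2 : V - e * Z = 0
    · have hV0 : V = 0 := by
        have h2V : 2 * V = 0 := by linear_combination hvz + hvz2
        exact (mul_eq_zero.mp h2V).resolve_left hchar
      apply hne; rw [hV0]; ring
    · have key : d * (U * Y * (V - e * Z)) ^ 2 = (U - Y) ^ 2 := by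
        linear_combination (-1 : K) * h1 + d * U ^ 2 * Y ^ 2 * h2 +
          (-2 * e * U * Y + d * U * V * Y * Z + e) * he +
          (d * U ^ 2 * Y ^ 2 * Z ^ 2 + 1 - 2 * U * Y) * hε
      have hprod : U * Y * (V - e * Z) ≠ 0 := by
        exact mul_ne_zero (mul_ne_zero hU hY) hvz2
      apply hd
      refine ⟨(U - Y) / (U * Y * (V - e * Z)), ?_⟩
      field_simp
      linear_combination key
  · have key : d * (U * Y * (V + e * Z)) ^ 2 = (U + Y) ^ 2 := by
      linear_combination (-1 : K) * h1 + d * U ^ 2 * Y ^ 2 * h2 +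
        (2 * e * U * Y + d * U * V * Y * Z + e) * he +
        (d * U ^ 2 * Y ^ 2 * Z ^ 2 + 1 + 2 * U * Y) * hε
    have hprod : U * Y * (V + e * Z) ≠ 0 := mul_ne_zero (mul_ne_zero hU hY) hvz
    apply hd
    refine ⟨(U + Y) / (U * Y * (V + e * Z)), ?_⟩
    field_simp
    linear_combination key

/-- If `(U,Y)` and `(V,Z)` lie on the affine Edwards curve
`U² + Y² = 1 + d U² Y²` with `d` a nonsquare in a field of characteristic `≠ 2`, then
`1 - d U V Y Z ≠ 0` and `1 + d U V Y Z ≠ 0`. -/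
theorem stmt_8 {K : Type*} [Field K] (hchar : (2 : K) ≠ 0) (d : K) (hd : ¬ IsSquare d)
    (U Y V Z : K)
    (h1 : U ^ 2 + Y ^ 2 = 1 + d * U ^ 2 * Y ^ 2)
    (h2 : V ^ 2 + Z ^ 2 = 1 + d * V ^ 2 * Z ^ 2) :
    1 - d * U * V * Y * Z ≠ 0 ∧ 1 + d * U * V * Y * Z ≠ 0 := by
  constructor
  · intro h
    exact edwards_aux hchar d hd U Y V Z 1 h1 h2 (by ring) (by linear_combination -h)
  · intro h
    exact edwards_aux hchar d hd U Y V Z (-1) h1 h2 (by ring) (by linear_combination h)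
end

section
/- The point D1 = (1−d, 2(1−d)) lies on the elliptic curve C, the point (0,0) lies on C, doubling gives 2·D1 = (0,0) and 2·(0,0) = O (the identity), and (0,0) ≠ O; hence D1 is a point of exact order 4 and (0,0) is a point of exact order 2 in the group of points of C. -/
/-! The point `(0, 0)` has `y = 0`, so it is its own negative. The tangent to `C` at
`D1 = (1 - d, 2(1 - d))` is `y = 2x`, and on it the equation of `C` becomes
`x (x - (1 - d))² = 0`: the tangent meets `C` a third time at `(0, 0)`, whence
`2 • D1 = -(0, 0) = (0, 0)`. -/

open WeierstrassCurve
open scoped Classical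

/-- The elliptic curve `C : y² = x(x² + 2(1+d)x + (1−d)²)` in Weierstrass form. -/
def edwardsWeierstrass {K : Type*} [Field K] (d : K) : WeierstrassCurve.Affine K :=
  { a₁ := 0, a₂ := 2 * (1 + d), a₃ := 0, a₄ := (1 - d) ^ 2, a₆ := 0 }

theorem addOrderOf_eq_four_of_two_nsmul {G : Type*} [AddMonoid G] {P : G}
    (h4 : 2 • 2 • P = 0) (h2 : 2 • P ≠ 0) : addOrderOf P = 4 := by
  have : Fact (Nat.Prime 2) := ⟨Nat.prime_two⟩
  refine addOrderOf_eq_prime_pow (p := 2) (n := 1) ?_ ?_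
  · simpa using h2
  · rwa [pow_two, mul_nsmul]

theorem WeierstrassCurve.Affine.Point.two_nsmul_some_zero_zero {F : Type*} [Field F]
    {W : WeierstrassCurve.Affine F} (ha₃ : W.a₃ = 0) (h : W.Nonsingular 0 0) :
    2 • some _ _ h = 0 := by
  rw [two_smul]
  exact add_self_of_Y_eq (by simp [Affine.negY, ha₃])

namespace edwardsWeierstrass

variable {K : Type*} [Field K] {d : K}

theorem nonsingular_zero_zero (hd1 : d ≠ 1) : (edwardsWeierstrass d).Nonsingular 0 0 :=
  Affine.nonsingular_zero.mpr ⟨rfl, Or.inr (pow_ne_zero 2 (sub_ne_zero.mpr hd1.symm))⟩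

theorem two_mul_one_sub_ne_negY (hchar : (2 : K) ≠ 0) (hd1 : d ≠ 1) :
    2 * (1 - d) ≠ (edwardsWeierstrass d).negY (1 - d) (2 * (1 - d)) := by
  have : (2 : K) * 2 * (1 - d) ≠ 0 := by simp [hchar, sub_eq_zero, hd1.symm]
  simp only [edwardsWeierstrass, Affine.negY, ne_eq]
  contrapose! this
  linear_combination this

theorem nonsingular_one_sub (hchar : (2 : K) ≠ 0) (hd1 : d ≠ 1) :
    (edwardsWeierstrass d).Nonsingular (1 - d) (2 * (1 - d)) := by
  refine (Affine.nonsingular_iff _ _).mpr ⟨?_, Or.inr (two_mul_one_sub_ne_negY hchar hd1)⟩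
  rw [Affine.equation_iff]
  simp only [edwardsWeierstrass]
  ring

theorem slope_one_sub (hchar : (2 : K) ≠ 0) (hd1 : d ≠ 1) :
    (edwardsWeierstrass d).slope (1 - d) (1 - d) (2 * (1 - d)) (2 * (1 - d)) = 2 := by
  have hne := two_mul_one_sub_ne_negY hchar hd1
  rw [Affine.slope_of_Y_ne rfl hne, div_eq_iff (sub_ne_zero.mpr hne)]
  simp only [edwardsWeierstrass, Affine.negY]
  ring

theorem two_nsmul_point_one_sub (hchar : (2 : K) ≠ 0) (hd1 : d ≠ 1)
    (hD : (edwardsWeierstrass d).Nonsingular (1 - d) (2 * (1 - d)))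
    (hO : (edwardsWeierstrass d).Nonsingular 0 0) :
    2 • Affine.Point.some _ _ hD = Affine.Point.some _ _ hO := by
  rw [two_smul, Affine.Point.add_self_of_Y_ne (two_mul_one_sub_ne_negY hchar hd1),
    Affine.Point.some.injEq, slope_one_sub hchar hd1]
  constructor
  · simp only [Affine.addX, edwardsWeierstrass]; ring
  · simp only [Affine.addY, Affine.negAddY, Affine.addX, Affine.negY, edwardsWeierstrass]; ring

end edwardsWeierstrass

theorem stmt_9_general {K : Type*} [Field K] (hchar : (2 : K) ≠ 0) (d : K)
    (hd1 : d ≠ 1) :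
    ∃ (hD1 : (edwardsWeierstrass d).Nonsingular (1 - d) (2 * (1 - d)))
      (hE1 : (edwardsWeierstrass d).Nonsingular 0 0),
      2 • (Affine.Point.some _ _ hD1) = Affine.Point.some _ _ hE1 ∧
      2 • (Affine.Point.some _ _ hE1) = (0 : (edwardsWeierstrass d).Point) ∧
      Affine.Point.some _ _ hE1 ≠ (0 : (edwardsWeierstrass d).Point) ∧
      addOrderOf (Affine.Point.some _ _ hD1) = 4 ∧
      addOrderOf (Affine.Point.some _ _ hE1) = 2 := by
  have hD1 := edwardsWeierstrass.nonsingular_one_sub hchar hd1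
  have hE1 := edwardsWeierstrass.nonsingular_zero_zero hd1
  have hdouble := edwardsWeierstrass.two_nsmul_point_one_sub hchar hd1 hD1 hE1
  have htwo := Affine.Point.two_nsmul_some_zero_zero rfl hE1
  have hne := Affine.Point.some_ne_zero hE1
  have : Fact (Nat.Prime 2) := ⟨Nat.prime_two⟩
  refine ⟨hD1, hE1, hdouble, htwo, hne, ?_, addOrderOf_eq_prime htwo hne⟩
  exact addOrderOf_eq_four_of_two_nsmul (by rw [hdouble, htwo]) (hdouble ▸ hne)

/-- `D1 = (1−d, 2(1−d))` and `(0,0)` lie on the curve `C`,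
`2·D1 = (0,0)`, `2·(0,0) = O` and `(0,0) ≠ O`; hence `D1` has exact order `4` and
`(0,0)` has exact order `2`. -/
theorem stmt_9 {K : Type*} [Field K] (hchar : (2 : K) ≠ 0) (d : K)
    (hd0 : d ≠ 0) (hd1 : d ≠ 1) :
    ∃ (hD1 : (edwardsWeierstrass d).Nonsingular (1 - d) (2 * (1 - d)))
      (hE1 : (edwardsWeierstrass d).Nonsingular 0 0),
      2 • (Affine.Point.some _ _ hD1) = Affine.Point.some _ _ hE1 ∧
      2 • (Affine.Point.some _ _ hE1) = (0 : (edwardsWeierstrass d).Point) ∧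
      Affine.Point.some _ _ hE1 ≠ (0 : (edwardsWeierstrass d).Point) ∧
      addOrderOf (Affine.Point.some _ _ hD1) = 4 ∧
      addOrderOf (Affine.Point.some _ _ hE1) = 2 :=
  stmt_9_general hchar d hd1
end

section
/- Let P = (x0, y0) be an affine point on the elliptic curve C with x0 ≠ 0. Then, in the group of points of C, P + (0,0) is the affine point ((1−d)²/x0, −(1−d)²·y0/x0²). In particular, translation by the 2-torsion point (0,0) acts on projective x-coordinates [k1, k2] (where x = k2/k1) by [k1, k2] ↦ [k2, (1−d)²·k1]. -/
/-!
On `y² = x³ + a₂x² + a₄x` the chord through `P = (x₀, y₀)` and `(0, 0)` is `y = ℓx` with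
`ℓ = y₀/x₀`. Its other two intersections with the curve are the roots of
`x² + (a₂ - ℓ²)x + a₄`, namely `x₀` and `x₃ = a₄/x₀`, and reflecting the third intersection
point gives `P + (0, 0) = (a₄/x₀, -ℓx₃) = (a₄/x₀, -a₄y₀/x₀²)`. On projective coordinates
`x = k₂/k₁` this is `[k₁ : k₂] ↦ [k₂ : a₄k₁]`.
-/

open WeierstrassCurve

namespace WeierstrassCurve.Affine

variable {F : Type*} [Field F] {W : WeierstrassCurve.Affine F}

lemma slope_zero_of_X_ne_zero [DecidableEq F] {x y : F} (hx : x ≠ 0) :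
    W.slope x 0 y 0 = y / x := by
  rw [slope_of_X_ne hx, sub_zero, sub_zero]

lemma addX_zero_div_eq (ha₁ : W.a₁ = 0) (ha₃ : W.a₃ = 0) (ha₆ : W.a₆ = 0) {x y : F}
    (hx : x ≠ 0) (h : W.Equation x y) : W.addX x 0 (y / x) = W.a₄ / x := by
  rw [equation_iff, ha₁, ha₃, ha₆] at h
  rw [addX, ha₁]
  field_simp
  linear_combination h

lemma addY_zero_div_eq (ha₁ : W.a₁ = 0) (ha₃ : W.a₃ = 0) (ha₆ : W.a₆ = 0) {x y : F}
    (hx : x ≠ 0) (h : W.Equation x y) : W.addY x 0 y (y / x) = -W.a₄ * y / x ^ 2 := by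
  rw [addY, negY, negAddY, addX_zero_div_eq ha₁ ha₃ ha₆ hx h, ha₁, ha₃]
  field_simp
  ring

lemma Point.some_add_some_zero_zero [DecidableEq F] (ha₁ : W.a₁ = 0) (ha₃ : W.a₃ = 0)
    {x y : F} (hx : x ≠ 0) (hP : W.Nonsingular x y) (h₀ : W.Nonsingular 0 0) :
    ∃ hQ : W.Nonsingular (W.a₄ / x) (-W.a₄ * y / x ^ 2),
      Point.some _ _ hP + Point.some _ _ h₀ = Point.some _ _ hQ := by
  have ha₆ : W.a₆ = 0 := by simpa [equation_iff] using h₀.1.symm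
  have hX := addX_zero_div_eq ha₁ ha₃ ha₆ hx hP.1
  have hY := addY_zero_div_eq ha₁ ha₃ ha₆ hx hP.1
  have hQ := nonsingular_add hP h₀ fun h => hx h.1
  rw [slope_zero_of_X_ne_zero hx, hX, hY] at hQ
  refine ⟨hQ, ?_⟩
  rw [Point.add_of_X_ne hx]
  simp only [slope_zero_of_X_ne_zero hx, hX, hY]

end WeierstrassCurve.Affine

open Classical in
theorem stmt_10_general {K : Type*} [Field K] (d : K)
    (x0 y0 : K) (hx0 : x0 ≠ 0)
    (hP : (edwardsWeierstrass d).Nonsingular x0 y0)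
    (hE1 : (edwardsWeierstrass d).Nonsingular 0 0) :
    ∃ hQ : (edwardsWeierstrass d).Nonsingular ((1 - d) ^ 2 / x0)
        (-(1 - d) ^ 2 * y0 / x0 ^ 2),
      Affine.Point.some _ _ hP + Affine.Point.some _ _ hE1 = Affine.Point.some _ _ hQ ∧
      ∀ k1 k2 : K, k1 ≠ 0 → x0 = k2 / k1 →
        (1 - d) ^ 2 / x0 = (1 - d) ^ 2 * k1 / k2 := by
  obtain ⟨hQ, hadd⟩ := Affine.Point.some_add_some_zero_zero rfl rfl hx0 hP hE1
  refine ⟨hQ, hadd, fun k1 k2 _ hx => ?_⟩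
  rw [hx, div_div_eq_mul_div]

open Classical in
/-- If `P = (x0, y0)` is an affine point on `C` with `x0 ≠ 0`, then
`P + (0,0)` is the affine point `((1−d)²/x0, −(1−d)²·y0/x0²)`.  In particular, translation
by `(0,0)` acts on projective x-coordinates `[k1, k2]` (with `x = k2/k1`) by
`[k1, k2] ↦ [k2, (1−d)² k1]`. -/
theorem stmt_10 {K : Type*} [Field K] (hchar : (2 : K) ≠ 0) (d : K)
    (hd0 : d ≠ 0) (hd1 : d ≠ 1) (x0 y0 : K) (hx0 : x0 ≠ 0)
    (hP : (edwardsWeierstrass d).Nonsingular x0 y0)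
    (hE1 : (edwardsWeierstrass d).Nonsingular 0 0) :
    ∃ hQ : (edwardsWeierstrass d).Nonsingular ((1 - d) ^ 2 / x0)
        (-(1 - d) ^ 2 * y0 / x0 ^ 2),
      Affine.Point.some _ _ hP + Affine.Point.some _ _ hE1 = Affine.Point.some _ _ hQ ∧
      ∀ k1 k2 : K, k1 ≠ 0 → x0 = k2 / k1 →
        (1 - d) ^ 2 / x0 = (1 - d) ^ 2 * k1 / k2 :=
  stmt_10_general d x0 y0 hx0 hP hE1
end

section
/- For every point D in the group of points of C, writing (u1,u2) = l(D) and (y1,y2) = l(D + D1), the relation (u1² − d·u2²)·y2² = (u1² − u2²)·y1² holds. (Equivalently, in affine coordinates U = u2/u1, Y = y2/y1 this is the Edwards curve equation U² + Y² = 1 + d·U²Y².) -/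
/-!
Write `e = 1 - d` and `q(x) = x² + 2(1 + d)x + e²`, so that `C` is `y² = x q(x)`. For an affine
point `D = (x, y)` one has `l₁(D)² - d l₂(D)² = e q(x)` and `l₁(D)² - l₂(D)² = 4 e x`. Translation
by `D1` sends `(x, y)` to a point whose Kummer coordinates `(y₁, y₂)` satisfy the two linear
relations `y y₂ + 2x y₁ = 0` and `q(x) y₂ + 2y y₁ = 0` (in Edwards terms, `Y = -2x / y`). Then
`q y₂² = -2y y₁ y₂ = 4x y₁²`, which is the claim after multiplying by `e`.
-/

open WeierstrassCurve

/-- The Kummer-line coordinates `l(P) = (l₁(P), l₂(P))`: `l(O) = (1,1)` and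
`l((x,y)) = (x + 1 - d, x - 1 + d)`. -/
def kummerLine {K : Type*} [Field K] (d : K) : (edwardsWeierstrass d).Point → K × K
  | Affine.Point.zero => (1, 1)
  | Affine.Point.some x _ _ => (x + 1 - d, x - 1 + d)

section EdwardsWeierstrass

open Classical

variable {K : Type*} [Field K] {d : K}

lemma edwardsWeierstrass_equation_iff (x y : K) :
    (edwardsWeierstrass d).Equation x y ↔
      y ^ 2 = x * (x ^ 2 + 2 * (1 + d) * x + (1 - d) ^ 2) := by
  rw [Affine.equation_iff]
  simp only [edwardsWeierstrass]
  constructor <;> intro h <;> linear_combination h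

lemma edwardsWeierstrass_slope_self_D1
    (hy : 2 * (1 - d) ≠ (edwardsWeierstrass d).negY (1 - d) (2 * (1 - d))) :
    (edwardsWeierstrass d).slope (1 - d) (1 - d) (2 * (1 - d)) (2 * (1 - d)) = 2 := by
  rw [Affine.slope_of_Y_ne rfl hy, div_eq_iff]
  · simp only [edwardsWeierstrass, Affine.negY]
    ring
  · simp only [edwardsWeierstrass, Affine.negY] at hy ⊢
    intro h0
    exact hy (by linear_combination h0)

lemma kummerLine_some_add_D1 {x y : K} (h : (edwardsWeierstrass d).Nonsingular x y)
    (hD1 : (edwardsWeierstrass d).Nonsingular (1 - d) (2 * (1 - d))) :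
    y * (kummerLine d (.some _ _ h + .some _ _ hD1)).2 +
        2 * x * (kummerLine d (.some _ _ h + .some _ _ hD1)).1 = 0 ∧
      (x ^ 2 + 2 * (1 + d) * x + (1 - d) ^ 2) * (kummerLine d (.some _ _ h + .some _ _ hD1)).2 +
        2 * y * (kummerLine d (.some _ _ h + .some _ _ hD1)).1 = 0 := by
  have hcurve := (edwardsWeierstrass_equation_iff x y).mp h.1
  by_cases hx : x = 1 - d
  · subst hx
    by_cases hy : y = (edwardsWeierstrass d).negY (1 - d) (2 * (1 - d))
    · rw [Affine.Point.add_of_Y_eq rfl hy]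
      simp only [Affine.negY, edwardsWeierstrass, zero_mul, sub_zero] at hy
      simp only [kummerLine]
      exact ⟨by linear_combination hy, by linear_combination 2 * hy⟩
    · rw [Affine.Point.add_of_Y_ne hy]
      have hy_ne : y ≠ -(2 * (1 - d)) := by simpa [edwardsWeierstrass] using hy
      obtain rfl : y = 2 * (1 - d) := by
        have hroots : (y - 2 * (1 - d)) * (y + 2 * (1 - d)) = 0 := by
          linear_combination hcurve
        refine sub_eq_zero.mp ((mul_eq_zero.mp hroots).resolve_right fun h0 => hy_ne ?_)
        linear_combination h0
      simp only [kummerLine, Affine.addX, edwardsWeierstrass_slope_self_D1 hy]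
      simp only [edwardsWeierstrass]
      constructor <;> ring
  · rw [Affine.Point.add_of_X_ne hx]
    have ht : x - (1 - d) ≠ 0 := sub_ne_zero.mpr hx
    simp only [kummerLine, Affine.addX, Affine.slope_of_X_ne hx, edwardsWeierstrass]
    field_simp
    constructor
    · linear_combination (y + 2 * x - 4 * (1 - d)) * hcurve
    · linear_combination (x ^ 2 + 2 * (1 + d) * x + (1 - d) ^ 2 + 2 * y - 8 * (1 - d)) * hcurve

end EdwardsWeierstrass

open Classical in
theorem stmt_11_general {K : Type*} [Field K] (d : K)
    (hD1 : (edwardsWeierstrass d).Nonsingular (1 - d) (2 * (1 - d)))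
    (D : (edwardsWeierstrass d).Point) :
    ((kummerLine d D).1 ^ 2 - d * (kummerLine d D).2 ^ 2) *
        (kummerLine d (D + Affine.Point.some _ _ hD1)).2 ^ 2 =
      ((kummerLine d D).1 ^ 2 - (kummerLine d D).2 ^ 2) *
        (kummerLine d (D + Affine.Point.some _ _ hD1)).1 ^ 2 := by
  rcases D with _ | ⟨x, y, h⟩
  · rw [← Affine.Point.zero_def, zero_add]
    simp only [kummerLine]
    ring
  · obtain ⟨hY, hQ⟩ := kummerLine_some_add_D1 h hD1
    generalize kummerLine d (.some _ _ h + .some _ _ hD1) = l at hY hQ ⊢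
    simp only [kummerLine]
    linear_combination (1 - d) * (l.2 * hQ - 2 * l.1 * hY)

open Classical in
/-- For every point `D` on `C`, with `(u1,u2) = l(D)` and
`(y1,y2) = l(D + D1)`, the Edwards relation
`(u1² − d u2²) y2² = (u1² − u2²) y1²` holds. -/
theorem stmt_11 {K : Type*} [Field K] (hchar : (2 : K) ≠ 0) (d : K)
    (hd0 : d ≠ 0) (hd1 : d ≠ 1)
    (hD1 : (edwardsWeierstrass d).Nonsingular (1 - d) (2 * (1 - d)))
    (D : (edwardsWeierstrass d).Point) :
    ((kummerLine d D).1 ^ 2 - d * (kummerLine d D).2 ^ 2) *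
        (kummerLine d (D + Affine.Point.some _ _ hD1)).2 ^ 2 =
      ((kummerLine d D).1 ^ 2 - (kummerLine d D).2 ^ 2) *
        (kummerLine d (D + Affine.Point.some _ _ hD1)).1 ^ 2 :=
  stmt_11_general d hD1 D
end

section
/- Let D and E be points in the group of points of C, and write (u1,u2) = l(D), (v1,v2) = l(E). Define B11 = −d·u1²v2² − d·u2²v1² + d·u2²v2² + u1²v1², B12 = B21 = (1−d)·u1u2v1v2, B22 = −d·u2²v2² − u1²v1² + u1²v2² + u2²v1². Then there exists λ ∈ K with λ ≠ 0 such that for all i, j ∈ {1,2}: B_{ij} = λ·(l_i(D+E)·l_j(D−E) + l_j(D+E)·l_i(D−E)). -/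
open WeierstrassCurve

/-!
On a curve `y² = f(x)` with `f` a monic cubic, the x-coordinates of `P + Q` and `P - Q`, viewed
as a point of `Sym² ℙ¹`, are the image of `(x(P), x(Q))` under Cassels' biquadratic forms: the
quadratic form with roots `x(P ± Q)` is proportional to `W₀ X² - W₁ X Z + W₂ Z²`. For two
affine points with distinct x-coordinates this is the classical pair of identities for
`x(P+Q) + x(P-Q)` and `x(P+Q) x(P-Q)`; when `x(P) = x(Q)` one may assume `Q = P` (replacing `Q`
by `-Q` only swaps `P + Q` and `P - Q`), and the identity is the duplication formula. The Kummer
coordinates `l = (x + (1-d), x - (1-d))` are a linear change of the x-coordinate, in which the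
matrix `B` becomes `(1 - d)` times the transformed forms.
-/

namespace WeierstrassCurve.Affine

variable {F : Type*} [Field F] {W : WeierstrassCurve.Affine F}

def biquadraticForms (W : WeierstrassCurve.Affine F) (p q : Fin 2 → F) : Fin 3 → F :=
  ![(p 0 * q 1 - q 0 * p 1) ^ 2,
    2 * ((p 0 * q 0 + W.a₄ * p 1 * q 1) * (p 0 * q 1 + q 0 * p 1)
      + 2 * W.a₂ * p 0 * q 0 * p 1 * q 1 + 2 * W.a₆ * (p 1 * q 1) ^ 2),
    (p 0 * q 0 - W.a₄ * p 1 * q 1) ^ 2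
      - 4 * W.a₆ * p 1 * q 1 * (p 0 * q 1 + q 0 * p 1 + W.a₂ * p 1 * q 1)]

/-- Up to the sign of the middle coefficient, the binary quadratic form with roots `p` and `q`. -/
def symmProd (p q : Fin 2 → F) : Fin 3 → F :=
  ![p 1 * q 1, p 0 * q 1 + p 1 * q 0, p 0 * q 0]

lemma symmProd_comm (p q : Fin 2 → F) : symmProd p q = symmProd q p := by
  simp only [symmProd, mul_comm, add_comm]

lemma biquadraticForms_one_zero_left (q : Fin 2 → F) :
    W.biquadraticForms ![1, 0] q = symmProd q q := by
  simp only [biquadraticForms, symmProd, Matrix.vecCons_inj, and_true, Matrix.cons_val_zero,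
    Matrix.cons_val_one]
  refine ⟨?_, ?_, ?_⟩ <;> ring

lemma biquadraticForms_one_zero_right (p : Fin 2 → F) :
    W.biquadraticForms p ![1, 0] = symmProd p p := by
  simp only [biquadraticForms, symmProd, Matrix.vecCons_inj, and_true, Matrix.cons_val_zero,
    Matrix.cons_val_one]
  refine ⟨?_, ?_, ?_⟩ <;> ring

lemma negY_eq_neg (ha₁ : W.a₁ = 0) (ha₃ : W.a₃ = 0) (x y : F) : W.negY x y = -y := by
  simp [negY, ha₁, ha₃]

lemma sq_eq_of_equation (ha₁ : W.a₁ = 0) (ha₃ : W.a₃ = 0) {x y : F} (h : W.Equation x y) :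
    y ^ 2 = x ^ 3 + W.a₂ * x ^ 2 + W.a₄ * x + W.a₆ := by
  simpa [ha₁, ha₃] using (equation_iff x y).mp h

lemma derivative_ne_zero_of_Y_eq (ha₁ : W.a₁ = 0) {x y : F} (h : W.Nonsingular x y)
    (hy : y = W.negY x y) : 3 * x ^ 2 + 2 * W.a₂ * x + W.a₄ ≠ 0 := by
  rcases ((nonsingular_iff x y).mp h).2 with h' | h'
  · simpa [ha₁, eq_comm] using h'
  · exact absurd hy h'

variable [DecidableEq F]

lemma exists_biquadraticForms_eq_smul_of_X_ne (ha₁ : W.a₁ = 0) (ha₃ : W.a₃ = 0)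
    {x₁ x₂ y₁ y₂ : F} (h₁ : W.Nonsingular x₁ y₁) (h₂ : W.Nonsingular x₂ y₂) (hx : x₁ ≠ x₂) :
    ∃ μ : F, μ ≠ 0 ∧ W.biquadraticForms (Point.some x₁ y₁ h₁).xRep (Point.some x₂ y₂ h₂).xRep =
      μ • symmProd (Point.some x₁ y₁ h₁ + Point.some x₂ y₂ h₂).xRep
        (Point.some x₁ y₁ h₁ - Point.some x₂ y₂ h₂).xRep := by
  have hx' : x₁ - x₂ ≠ 0 := sub_ne_zero.mpr hx
  refine ⟨(x₁ - x₂) ^ 2, pow_ne_zero 2 hx', ?_⟩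
  rw [sub_eq_add_neg (Point.some x₁ y₁ h₁), Point.neg_some, Point.add_of_X_ne hx,
    Point.add_of_X_ne hx]
  simp only [Point.xRep_some, addX, slope_of_X_ne hx, negY_eq_neg ha₁ ha₃, ha₁]
  have hy₁ := sq_eq_of_equation ha₁ ha₃ h₁.1
  have hy₂ := sq_eq_of_equation ha₁ ha₃ h₂.1
  have hs : (y₁ - y₂) / (x₁ - x₂) * (x₁ - x₂) = y₁ - y₂ := div_mul_cancel₀ _ hx'
  have ht : (y₁ - -y₂) / (x₁ - x₂) * (x₁ - x₂) = y₁ + y₂ := by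
    rw [div_mul_cancel₀ _ hx', sub_neg_eq_add]
  generalize (y₁ - y₂) / (x₁ - x₂) = s at hs ⊢
  generalize (y₁ - -y₂) / (x₁ - x₂) = t at ht ⊢
  have hAdd : (x₁ - x₂) ^ 2 * (s ^ 2 - W.a₂ - x₁ - x₂) =
      (y₁ - y₂) ^ 2 - (W.a₂ + x₁ + x₂) * (x₁ - x₂) ^ 2 := by
    linear_combination (s * (x₁ - x₂) + (y₁ - y₂)) * hs
  have hSub : (x₁ - x₂) ^ 2 * (t ^ 2 - W.a₂ - x₁ - x₂) =
      (y₁ + y₂) ^ 2 - (W.a₂ + x₁ + x₂) * (x₁ - x₂) ^ 2 := by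
    linear_combination (t * (x₁ - x₂) + (y₁ + y₂)) * ht
  simp only [biquadraticForms, symmProd, Matrix.smul_cons, Matrix.smul_empty, smul_eq_mul,
    Matrix.vecCons_inj, and_true, Matrix.cons_val_zero, Matrix.cons_val_one]
  refine ⟨by ring, by linear_combination -hAdd - hSub - 2 * hy₁ - 2 * hy₂, ?_⟩
  -- multiply `hAdd` by `hSub`; the curve equations make `(y₁² - y₂²)²` divisible by `(x₁ - x₂)²`
  refine mul_left_cancel₀ (pow_ne_zero 2 hx') ?_
  linear_combination -((x₁ - x₂) ^ 2 * (t ^ 2 - W.a₂ - x₁ - x₂)) * hAdd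
    - ((y₁ - y₂) ^ 2 - (W.a₂ + x₁ + x₂) * (x₁ - x₂) ^ 2) * hSub
    + (2 * (W.a₂ + x₁ + x₂) * (x₁ - x₂) ^ 2 - (y₁ ^ 2 - y₂ ^ 2
      + (x₁ ^ 3 + W.a₂ * x₁ ^ 2 + W.a₄ * x₁) - (x₂ ^ 3 + W.a₂ * x₂ ^ 2 + W.a₄ * x₂))) * hy₁
    + (2 * (W.a₂ + x₁ + x₂) * (x₁ - x₂) ^ 2 + (y₁ ^ 2 - y₂ ^ 2
      + (x₁ ^ 3 + W.a₂ * x₁ ^ 2 + W.a₄ * x₁) - (x₂ ^ 3 + W.a₂ * x₂ ^ 2 + W.a₄ * x₂))) * hy₂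

lemma exists_biquadraticForms_self_eq_smul (ha₁ : W.a₁ = 0) (ha₃ : W.a₃ = 0) (P : W.Point) :
    ∃ μ : F, μ ≠ 0 ∧
      W.biquadraticForms P.xRep P.xRep = μ • symmProd (P + P).xRep (P - P).xRep := by
  rcases P with _ | ⟨x, y, h⟩
  · exact ⟨1, one_ne_zero, by simp [← Point.zero_def, biquadraticForms_one_zero_left]⟩
  have hf := sq_eq_of_equation ha₁ ha₃ h.1
  rw [sub_self, Point.xRep_zero]
  by_cases hy : y = W.negY x y
  · have h2y : 2 * y = 0 := by rw [negY_eq_neg ha₁ ha₃] at hy; linear_combination hy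
    refine ⟨(3 * x ^ 2 + 2 * W.a₂ * x + W.a₄) ^ 2,
      pow_ne_zero 2 (derivative_ne_zero_of_Y_eq ha₁ h hy), ?_⟩
    rw [Point.add_self_of_Y_eq hy]
    simp only [Point.xRep_some, Point.xRep_zero, biquadraticForms, symmProd, Matrix.smul_cons,
      Matrix.smul_empty, smul_eq_mul, Matrix.vecCons_inj, and_true, Matrix.cons_val_zero,
      Matrix.cons_val_one]
    refine ⟨by ring, by linear_combination (-4 : F) * hf + 2 * y * h2y, ?_⟩
    linear_combination (-(W.a₂ + 2 * x)) * (2 * y) * h2y + 4 * (W.a₂ + 2 * x) * hf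
  · have h2y : y - W.negY x y ≠ 0 := sub_ne_zero.mpr hy
    refine ⟨(y - W.negY x y) ^ 2, pow_ne_zero 2 h2y, ?_⟩
    rw [Point.add_self_of_Y_ne hy]
    simp only [Point.xRep_some, addX, slope_of_Y_ne rfl hy, ha₁]
    have hℓ : (3 * x ^ 2 + 2 * W.a₂ * x + W.a₄ - 0 * y) / (y - W.negY x y) * (y - W.negY x y) =
        3 * x ^ 2 + 2 * W.a₂ * x + W.a₄ := by
      rw [div_mul_cancel₀ _ h2y]; ring
    generalize (3 * x ^ 2 + 2 * W.a₂ * x + W.a₄ - 0 * y) / (y - W.negY x y) = ℓ at hℓ ⊢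
    rw [negY_eq_neg ha₁ ha₃] at hℓ ⊢
    simp only [biquadraticForms, symmProd, Matrix.smul_cons, Matrix.smul_empty, smul_eq_mul,
      Matrix.vecCons_inj, and_true, Matrix.cons_val_zero, Matrix.cons_val_one]
    refine ⟨by ring, by linear_combination (-4 : F) * hf, ?_⟩
    linear_combination (-(ℓ * (y - -y)) - (3 * x ^ 2 + 2 * W.a₂ * x + W.a₄)) * hℓ
      + 4 * (W.a₂ + 2 * x) * hf

lemma exists_biquadraticForms_neg_right_eq_smul {P Q : W.Point}
    (h : ∃ μ : F, μ ≠ 0 ∧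
      W.biquadraticForms P.xRep Q.xRep = μ • symmProd (P + Q).xRep (P - Q).xRep) :
    ∃ μ : F, μ ≠ 0 ∧
      W.biquadraticForms P.xRep (-Q).xRep = μ • symmProd (P + -Q).xRep (P - -Q).xRep := by
  rwa [Point.xRep_neg, ← sub_eq_add_neg, sub_neg_eq_add, symmProd_comm]

theorem exists_biquadraticForms_eq_smul (ha₁ : W.a₁ = 0) (ha₃ : W.a₃ = 0) (P Q : W.Point) :
    ∃ μ : F, μ ≠ 0 ∧
      W.biquadraticForms P.xRep Q.xRep = μ • symmProd (P + Q).xRep (P - Q).xRep := by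
  by_cases hPQ : P.xRep = Q.xRep
  · rcases Point.eq_or_eq_neg_of_xRep_eq_xRep hPQ with rfl | rfl
    · exact exists_biquadraticForms_self_eq_smul ha₁ ha₃ P
    · simpa using exists_biquadraticForms_neg_right_eq_smul
        (exists_biquadraticForms_self_eq_smul ha₁ ha₃ (-Q))
  rcases P with _ | ⟨x₁, y₁, h₁⟩
  · exact ⟨1, one_ne_zero, by simp [← Point.zero_def, biquadraticForms_one_zero_left]⟩
  rcases Q with _ | ⟨x₂, y₂, h₂⟩
  · exact ⟨1, one_ne_zero, by simp [← Point.zero_def, biquadraticForms_one_zero_right]⟩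
  exact exists_biquadraticForms_eq_smul_of_X_ne ha₁ ha₃ h₁ h₂ fun hx => hPQ (by simp [hx])

end WeierstrassCurve.Affine

open Affine in
lemma kummerLine_eq_xRep {K : Type*} [Field K] (d : K) (P : (edwardsWeierstrass d).Point) :
    kummerLine d P = (P.xRep 0 + (1 - d) * P.xRep 1, P.xRep 0 - (1 - d) * P.xRep 1) := by
  rcases P with _ | ⟨x, y, h⟩
  · simp [kummerLine, ← Point.zero_def]
  · simp only [kummerLine, Point.xRep_some, Matrix.cons_val_zero, Matrix.cons_val_one]
    ext <;> ring

open Classical in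
theorem stmt_12_general {K : Type*} [Field K] (hchar : (2 : K) ≠ 0) (d : K)
    (hd1 : d ≠ 1)
    (D E : (edwardsWeierstrass d).Point) :
    let u1 := (kummerLine d D).1
    let u2 := (kummerLine d D).2
    let v1 := (kummerLine d E).1
    let v2 := (kummerLine d E).2
    let p1 := (kummerLine d (D + E)).1
    let p2 := (kummerLine d (D + E)).2
    let m1 := (kummerLine d (D - E)).1
    let m2 := (kummerLine d (D - E)).2
    ∃ lam : K, lam ≠ 0 ∧
      -(d * u1 ^ 2 * v2 ^ 2) - d * u2 ^ 2 * v1 ^ 2 + d * u2 ^ 2 * v2 ^ 2 + u1 ^ 2 * v1 ^ 2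
          = lam * (p1 * m1 + p1 * m1) ∧
      (1 - d) * u1 * u2 * v1 * v2 = lam * (p1 * m2 + p2 * m1) ∧
      (1 - d) * u1 * u2 * v1 * v2 = lam * (p2 * m1 + p1 * m2) ∧
      -(d * u2 ^ 2 * v2 ^ 2) - u1 ^ 2 * v1 ^ 2 + u1 ^ 2 * v2 ^ 2 + u2 ^ 2 * v1 ^ 2
          = lam * (p2 * m2 + p2 * m2) := by
  obtain ⟨μ, hμ, hB⟩ := Affine.exists_biquadraticForms_eq_smul rfl rfl D E
  obtain ⟨lam, hlam⟩ : ∃ lam : K, 2 * lam = (1 - d) * μ :=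
    ⟨(1 - d) * μ / 2, mul_div_cancel₀ _ hchar⟩
  have hlam0 : lam ≠ 0 := by
    rintro rfl
    exact mul_ne_zero (sub_ne_zero.mpr (Ne.symm hd1)) hμ (by linear_combination -hlam)
  simp only [kummerLine_eq_xRep]
  simp only [Affine.biquadraticForms, Affine.symmProd, Matrix.smul_cons, Matrix.smul_empty,
    smul_eq_mul, Matrix.vecCons_inj, and_true] at hB
  rw [show (edwardsWeierstrass d).a₂ = 2 * (1 + d) from rfl,
    show (edwardsWeierstrass d).a₄ = (1 - d) ^ 2 from rfl,
    show (edwardsWeierstrass d).a₆ = 0 from rfl] at hB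
  obtain ⟨h₀, h₁, h₂⟩ := hB
  generalize D.xRep 0 = x₁, D.xRep 1 = z₁, E.xRep 0 = x₂, E.xRep 1 = z₂, (D + E).xRep 0 = xAdd,
    (D + E).xRep 1 = zAdd, (D - E).xRep 0 = xSub, (D - E).xRep 1 = zSub at h₀ h₁ h₂ ⊢
  refine ⟨lam, hlam0, ?_, ?_, ?_, ?_⟩
  · linear_combination (1 - d) * h₂ + (1 - d) ^ 2 * h₁ + (1 - d) ^ 3 * h₀
      - (xAdd + (1 - d) * zAdd) * (xSub + (1 - d) * zSub) * hlam
  · linear_combination (1 - d) * h₂ - (1 - d) ^ 3 * h₀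
      - (xAdd * xSub - (1 - d) ^ 2 * zAdd * zSub) * hlam
  · linear_combination (1 - d) * h₂ - (1 - d) ^ 3 * h₀
      - (xAdd * xSub - (1 - d) ^ 2 * zAdd * zSub) * hlam
  · linear_combination (1 - d) * h₂ - (1 - d) ^ 2 * h₁ + (1 - d) ^ 3 * h₀
      - (xAdd - (1 - d) * zAdd) * (xSub - (1 - d) * zSub) * hlam

open Classical in
/-- The biquadratic forms `B_{ij}` in the Kummer-line coordinates of
`D` and `E` are projectively equal to the symmetric matrix
`l_i(D+E)·l_j(D−E) + l_j(D+E)·l_i(D−E)`. -/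
theorem stmt_12 {K : Type*} [Field K] (hchar : (2 : K) ≠ 0) (d : K)
    (hd0 : d ≠ 0) (hd1 : d ≠ 1)
    (D E : (edwardsWeierstrass d).Point) :
    let u1 := (kummerLine d D).1
    let u2 := (kummerLine d D).2
    let v1 := (kummerLine d E).1
    let v2 := (kummerLine d E).2
    let p1 := (kummerLine d (D + E)).1
    let p2 := (kummerLine d (D + E)).2
    let m1 := (kummerLine d (D - E)).1
    let m2 := (kummerLine d (D - E)).2
    ∃ lam : K, lam ≠ 0 ∧
      -(d * u1 ^ 2 * v2 ^ 2) - d * u2 ^ 2 * v1 ^ 2 + d * u2 ^ 2 * v2 ^ 2 + u1 ^ 2 * v1 ^ 2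
          = lam * (p1 * m1 + p1 * m1) ∧
      (1 - d) * u1 * u2 * v1 * v2 = lam * (p1 * m2 + p2 * m1) ∧
      (1 - d) * u1 * u2 * v1 * v2 = lam * (p2 * m1 + p1 * m2) ∧
      -(d * u2 ^ 2 * v2 ^ 2) - u1 ^ 2 * v1 ^ 2 + u1 ^ 2 * v2 ^ 2 + u2 ^ 2 * v1 ^ 2
          = lam * (p2 * m2 + p2 * m2) :=
  stmt_12_general hchar d hd1 D E
end
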